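/- arXiv:1701.00200 — 16 statements merged into one kernel-verified Lean document; each statement's English description precedes it below -/
import Mathlib

section
/- Let (V, {·,·}) be a Lie algebra over ℂ and let ∘ : V × V → V be a bilinear product satisfying, for all x, y, z ∈ V: {x, y} ∘ z = x ∘ (y ∘ z) − y ∘ (x ∘ z), and x ∘ {y, z} − {x ∘ y, z} − {y, x ∘ z} = x ∘ ⟨y, z⟩ − ⟨x ∘ y, z⟩ − ⟨y, x ∘ z⟩, where ⟨u, v⟩ := u ∘ v − v ∘ u. Then the operation [x, y] := {x, y} − ⟨x, y⟩ is a Lie bracket on V, i.e. it is bilinear, antisymmetric and satisfies the Jacobi identity. -/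
/-- The hypotheses of Definition 4.3 (`defi{}`): a bilinear product `∘` on a Lie algebra
`(V, {·,·})` (the bracket `⁅·,·⁆` plays the role of `{·,·}`) satisfying
`{x,y} ∘ z = x ∘ (y ∘ z) − y ∘ (x ∘ z)` and
`x ∘ {y,z} − {x ∘ y, z} − {y, x ∘ z} = x ∘ ⟨y,z⟩ − ⟨x ∘ y, z⟩ − ⟨y, x ∘ z⟩`,
where `⟨u,v⟩ = u ∘ v − v ∘ u`. -/
def IsPostLieStruct' {V : Type*} [LieRing V] [LieAlgebra ℂ V]
    (mul : V →ₗ[ℂ] V →ₗ[ℂ] V) : Prop :=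
  (∀ x y z : V, mul ⁅x, y⁆ z = mul x (mul y z) - mul y (mul x z)) ∧
  (∀ x y z : V,
    mul x ⁅y, z⁆ - ⁅mul x y, z⁆ - ⁅y, mul x z⁆ =
      mul x (mul y z - mul z y)
        - (mul (mul x y) z - mul z (mul x y))
        - (mul y (mul x z) - mul (mul x z) y))

/-- The operation `[x, y] := {x, y} − ⟨x, y⟩`. -/
def postBracket' {V : Type*} [LieRing V] [LieAlgebra ℂ V]
    (mul : V →ₗ[ℂ] V →ₗ[ℂ] V) (x y : V) : V :=
  ⁅x, y⁆ - (mul x y - mul y x)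

/-! The second axiom says precisely that each left multiplication `x ∘ ·` is a derivation of
`[·,·]`, and the first rewrites `[y,z] ∘ x` through iterated products. Writing
`[x,w] = {x,w} − x ∘ w + w ∘ x` with `w = [y,z]` and applying both, the cyclic sum of
`[x,[y,z]]` becomes the Jacobi sum of `{·,·}`, which vanishes, plus terms cancelling in
cyclic pairs. -/

section

variable {V : Type*} [LieRing V] [LieAlgebra ℂ V] (mul : V →ₗ[ℂ] V →ₗ[ℂ] V)

theorem postBracket'_add_left (x x' y : V) :
    postBracket' mul (x + x') y = postBracket' mul x y + postBracket' mul x' y := by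
  simp only [postBracket', add_lie, map_add, LinearMap.add_apply]
  abel

theorem postBracket'_smul_left (c : ℂ) (x y : V) :
    postBracket' mul (c • x) y = c • postBracket' mul x y := by
  simp only [postBracket', smul_lie, map_smul, LinearMap.smul_apply, smul_sub]

theorem postBracket'_add_right (x y y' : V) :
    postBracket' mul x (y + y') = postBracket' mul x y + postBracket' mul x y' := by
  simp only [postBracket', lie_add, map_add, LinearMap.add_apply]
  abel

theorem postBracket'_smul_right (c : ℂ) (x y : V) :
    postBracket' mul x (c • y) = c • postBracket' mul x y := by
  simp only [postBracket', lie_smul, map_smul, LinearMap.smul_apply, smul_sub]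

theorem postBracket'_skew (x y : V) : postBracket' mul x y = -postBracket' mul y x := by
  rw [postBracket', postBracket', ← lie_skew y x]
  abel

end

namespace IsPostLieStruct'

variable {V : Type*} [LieRing V] [LieAlgebra ℂ V] {mul : V →ₗ[ℂ] V →ₗ[ℂ] V}

theorem mul_postBracket' (h : IsPostLieStruct' mul) (x y z : V) :
    mul x (postBracket' mul y z) = postBracket' mul (mul x y) z + postBracket' mul y (mul x z) := by
  have h2 := h.2 x y z
  rw [← sub_eq_zero] at h2 ⊢
  simp only [postBracket', map_sub] at h2 ⊢
  rw [← h2]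
  abel

theorem postBracket'_mul (h : IsPostLieStruct' mul) (x y z : V) :
    mul (postBracket' mul x y) z
      = mul x (mul y z) - mul y (mul x z) - (mul (mul x y) z - mul (mul y x) z) := by
  simp only [postBracket', map_sub, LinearMap.sub_apply, h.1]

theorem postBracket'_jacobi (h : IsPostLieStruct' mul) (x y z : V) :
    postBracket' mul x (postBracket' mul y z) + postBracket' mul y (postBracket' mul z x)
      + postBracket' mul z (postBracket' mul x y) = 0 := by
  have expand : ∀ a b c : V, postBracket' mul a (postBracket' mul b c)
      = ⁅a, postBracket' mul b c⁆ - postBracket' mul (mul a b) c - postBracket' mul b (mul a c)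
        + mul (postBracket' mul b c) a := by
    intro a b c
    rw [postBracket', mul_postBracket' h]
    abel
  simp only [expand, postBracket'_mul h]
  simp only [postBracket', lie_sub]
  rw [← lie_skew z (mul x y), ← lie_skew x (mul y z), ← lie_skew y (mul z x), ← lie_jacobi x y z]
  abel

end IsPostLieStruct'

theorem stmt1 (V : Type*) [LieRing V] [LieAlgebra ℂ V]
    (mul : V →ₗ[ℂ] V →ₗ[ℂ] V) (h : IsPostLieStruct' mul) :
    (∀ x x' y : V,
        postBracket' mul (x + x') y = postBracket' mul x y + postBracket' mul x' y) ∧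
    (∀ (c : ℂ) (x y : V), postBracket' mul (c • x) y = c • postBracket' mul x y) ∧
    (∀ x y y' : V,
        postBracket' mul x (y + y') = postBracket' mul x y + postBracket' mul x y') ∧
    (∀ (c : ℂ) (x y : V), postBracket' mul x (c • y) = c • postBracket' mul x y) ∧
    (∀ x y : V, postBracket' mul x y = - postBracket' mul y x) ∧
    (∀ x y z : V,
        postBracket' mul x (postBracket' mul y z)
          + postBracket' mul y (postBracket' mul z x)
          + postBracket' mul z (postBracket' mul x y) = 0) :=
  ⟨postBracket'_add_left mul, postBracket'_smul_left mul, postBracket'_add_right mul,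
    postBracket'_smul_right mul, postBracket'_skew mul, h.postBracket'_jacobi⟩
end

section
/- Let φ : ℤ × ℤ → ℂ and define a bilinear product ∘ on the Witt algebra W by L_m ∘ L_n = φ(m, n)·L_{m+n} for all m, n ∈ ℤ. Then (W, [·,·], ∘) is a post-Lie algebra if and only if there exists a function f : ℤ → ℂ such that φ(m, n) = (m − n)·f(m) for all m, n ∈ ℤ and f satisfies equation (E). -/
noncomputable section

/-- The underlying space of the Witt algebra: the free ℂ-module on basis `{L m : m ∈ ℤ}`,
realized as finitely supported functions `ℤ →₀ ℂ`. -/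
abbrev W : Type := ℤ →₀ ℂ

/-- The standard basis vector `L m`. -/
def L (m : ℤ) : W := Finsupp.single m 1

/-- `(W, br, mul)` is a post-Lie algebra: `br` plays the role of the Lie bracket `[·,·]`
and `mul` of the product `∘`, satisfying
`[x,y] ∘ z = x ∘ (y ∘ z) − y ∘ (x ∘ z) − ⟨x,y⟩ ∘ z` and
`x ∘ [y,z] = [x ∘ y, z] + [y, x ∘ z]`, where `⟨x,y⟩ = x ∘ y − y ∘ x`. -/
def IsPostLie (br mul : W →ₗ[ℂ] W →ₗ[ℂ] W) : Prop :=
  (∀ x y z : W, mul (br x y) z =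
      mul x (mul y z) - mul y (mul x z) - mul (mul x y - mul y x) z) ∧
  (∀ x y z : W, mul x (br y z) = br (mul x y) z + br y (mul x z))

/-- Equation (E). -/
def EqE (f : ℤ → ℂ) : Prop :=
  ∀ m n : ℤ,
    (m - n : ℂ) * (f (m + n) + f m * f (m + n) + f n * f (m + n) - f m * f n) = 0

/-- Equation (E2). -/
def EqE2 (ν : ℤ) (g : ℤ → ℂ) : Prop :=
  ∀ m n : ℤ,
    (m - n : ℂ) * g m * g n =
      ((m - n + ν : ℂ) * g m + (m - n - ν : ℂ) * g n) * g (m + n + ν)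

/-- Equation (E3). -/
def EqE3 (ν : ℤ) (f g : ℤ → ℂ) : Prop :=
  ∀ m n : ℤ,
    (m - n : ℂ) * (f m + f n + 1) * g (m + n) =
      (n - m + ν : ℂ) * (f (m + n + ν) - f m) * g n +
        (n - m - ν : ℂ) * (f (m + n + ν) - f n) * g m

/-!
Evaluated on basis vectors, the two post-Lie axioms become identities for `φ`. The second one
says that every `L m ∘ ·` is a derivation; taking `k = 0` gives `φ m n = (m - n) f m` for
`m ≠ 0`, and for `m = 0` it says that `φ 0` is additive off the diagonal, hence linear.
Substituting this form into the first axiom at `k = m + n - 1` isolates (E), and conversely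
`(m + n - k)` times (E) gives back the first axiom.
-/

theorem eq_zsmul_of_add_of_ne {G : Type*} [AddCommGroup G] {g : ℤ → G}
    (h : ∀ n k, n ≠ k → g (n + k) = g n + g k) (n : ℤ) : g n = n • g 1 := by
  have h0 : g 0 = 0 := by simpa using h 1 0 one_ne_zero
  have h2 : g 2 = g 1 + g 1 := by
    -- `2 = 1 + 1` lies on the diagonal, so expand `g 5` in two ways instead
    have h14 := h 1 4 (by norm_num)
    have h23 := h 2 3 (by norm_num)
    have h13 := h 1 3 (by norm_num)
    norm_num at h14 h23 h13
    rw [h13, ← add_assoc] at h14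
    exact (add_right_cancel (h14.symm.trans h23)).symm
  have step : ∀ n, g (n + 1) = g n + g 1 := by
    intro n
    rcases eq_or_ne n 1 with rfl | hn
    · exact h2
    · exact h n 1 hn
  induction n using Int.induction_on with
  | zero => simp [h0]
  | succ i ih => rw [step, ih, add_one_zsmul]
  | pred i ih =>
    rw [eq_sub_of_add_eq (step (-i - 1)).symm, sub_add_cancel, ih, sub_one_zsmul, sub_eq_add_neg]

section Derivation

variable {K : Type*} [Field K] [CharZero K]

/-- The coefficients of `L m ∘ [L n, L k] = [L m ∘ L n, L k] + [L n, L m ∘ L k]`. -/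
def IsWittDerivation (φ : ℤ → ℤ → K) : Prop :=
  ∀ m n k : ℤ, (n - k : K) * φ m (n + k) = (m + n - k) * φ m n + (n - m - k) * φ m k

theorem isWittDerivation_iff {φ : ℤ → ℤ → K} :
    IsWittDerivation φ ↔ ∃ f : ℤ → K, ∀ m n : ℤ, φ m n = (m - n) * f m := by
  -- any admissible `f` has `f m = -φ m (m + 1)`
  refine ⟨fun h => ⟨fun m => -φ m (m + 1), fun m n => ?_⟩, ?_⟩
  · rcases eq_or_ne m 0 with rfl | hm
    · have hadd : ∀ n k : ℤ, n ≠ k → φ 0 (n + k) = φ 0 n + φ 0 k := fun n k hnk => by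
        have hnk' : (n - k : K) ≠ 0 := sub_ne_zero.mpr (mod_cast hnk)
        apply mul_left_cancel₀ hnk'
        linear_combination h 0 n k
      rw [eq_zsmul_of_add_of_ne hadd n]
      simp
    · have hm' : (m : K) ≠ 0 := mod_cast hm
      apply mul_left_cancel₀ hm'
      have hn := h m n 0
      have hm1 := h m (m + 1) 0
      simp only [add_zero, Int.cast_zero, Int.cast_add, Int.cast_one] at hn hm1
      linear_combination -hn - (m - n : K) * hm1
  · rintro ⟨f, hf⟩ m n k
    simp only [hf]
    push_cast
    ring

end Derivation

theorem forall_mul_br_coeff_iff_eqE {φ : ℤ → ℤ → ℂ} {f : ℤ → ℂ}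
    (hf : ∀ m n : ℤ, φ m n = (m - n : ℂ) * f m) :
    (∀ m n k : ℤ, (m - n : ℂ) * φ (m + n) k =
        φ n k * φ m (n + k) - φ m k * φ n (m + k) - (φ m n - φ n m) * φ (m + n) k) ↔
      EqE f := by
  simp only [hf]
  push_cast
  refine ⟨fun h m n => ?_, fun hE m n k => ?_⟩
  · have h' := h m n (m + n - 1)
    push_cast at h'
    linear_combination h'
  · linear_combination ((m : ℂ) + n - k) * hE m n

lemma smul_L_inj {a b : ℂ} {s : ℤ} : a • L s = b • L s ↔ a = b := by
  simp only [L, Finsupp.smul_single_one, (Finsupp.single_injective s).eq_iff]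

lemma trilinear_ext_L {F G : W →ₗ[ℂ] W →ₗ[ℂ] W →ₗ[ℂ] W}
    (h : ∀ m n k : ℤ, F (L m) (L n) (L k) = G (L m) (L n) (L k)) : F = G :=
  LinearMap.ext_basis Finsupp.basisSingleOne Finsupp.basisSingleOne fun m n =>
    Finsupp.basisSingleOne.ext fun k => by simpa [L] using h m n k

theorem isPostLie_iff_forall_L (br mul : W →ₗ[ℂ] W →ₗ[ℂ] W) :
    IsPostLie br mul ↔
      (∀ m n k : ℤ, mul (br (L m) (L n)) (L k) =
        mul (L m) (mul (L n) (L k)) - mul (L n) (mul (L m) (L k)) -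
          mul (mul (L m) (L n) - mul (L n) (L m)) (L k)) ∧
      (∀ m n k : ℤ, mul (L m) (br (L n) (L k)) =
        br (mul (L m) (L n)) (L k) + br (L n) (mul (L m) (L k))) := by
  refine ⟨fun h => ⟨fun m n k => h.1 _ _ _, fun m n k => h.2 _ _ _⟩, fun ⟨h1, h2⟩ => ⟨?_, ?_⟩⟩
  -- the identities are stated without `-`, for which instance search fails on `W →ₗ W →ₗ W →ₗ W`
  · have key : br.compr₂ mul + (((LinearMap.llcomp ℂ W W W).comp mul).compl₂ mul).flip +
          mul.compr₂ mul =
        ((LinearMap.llcomp ℂ W W W).comp mul).compl₂ mul + mul.flip.compr₂ mul :=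
      trilinear_ext_L fun m n k => by
        simp only [LinearMap.add_apply, LinearMap.compr₂_apply, LinearMap.compl₂_apply,
          LinearMap.comp_apply, LinearMap.llcomp_apply, LinearMap.flip_apply, h1 m n k, map_sub,
          LinearMap.sub_apply]
        abel
    intro x y z
    have := LinearMap.congr_fun (LinearMap.congr_fun₂ key x y) z
    simp only [LinearMap.add_apply, LinearMap.compr₂_apply, LinearMap.compl₂_apply,
      LinearMap.comp_apply, LinearMap.llcomp_apply, LinearMap.flip_apply] at this
    rw [map_sub, LinearMap.sub_apply]
    linear_combination (norm := module) this
  · have key : ((LinearMap.llcomp ℂ W W W).comp mul).compl₂ br =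
        mul.compr₂ br + (((LinearMap.llcomp ℂ W W W).comp br).compl₂ mul).flip :=
      trilinear_ext_L fun m n k => by simpa using h2 m n k
    intro x y z
    simpa using LinearMap.congr_fun (LinearMap.congr_fun₂ key x y) z

theorem forall_mul_br_L_iff {br mul : W →ₗ[ℂ] W →ₗ[ℂ] W} {φ : ℤ → ℤ → ℂ}
    (hbr : ∀ m n : ℤ, br (L m) (L n) = (m - n : ℂ) • L (m + n))
    (hmul : ∀ m n : ℤ, mul (L m) (L n) = φ m n • L (m + n)) :
    (∀ m n k : ℤ, mul (br (L m) (L n)) (L k) =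
        mul (L m) (mul (L n) (L k)) - mul (L n) (mul (L m) (L k)) -
          mul (mul (L m) (L n) - mul (L n) (L m)) (L k)) ↔
      ∀ m n k : ℤ, (m - n : ℂ) * φ (m + n) k =
        φ n k * φ m (n + k) - φ m k * φ n (m + k) - (φ m n - φ n m) * φ (m + n) k := by
  refine forall₃_congr fun m n k => ?_
  simp only [hbr, hmul, map_smul, map_sub, LinearMap.sub_apply, LinearMap.smul_apply, smul_smul]
  rw [add_comm n m, ← add_assoc, ← add_assoc, add_comm n m, ← sub_smul, ← sub_smul, ← sub_smul,
    smul_L_inj]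
  constructor <;> intro h <;> linear_combination h

theorem forall_mul_L_br_iff {br mul : W →ₗ[ℂ] W →ₗ[ℂ] W} {φ : ℤ → ℤ → ℂ}
    (hbr : ∀ m n : ℤ, br (L m) (L n) = (m - n : ℂ) • L (m + n))
    (hmul : ∀ m n : ℤ, mul (L m) (L n) = φ m n • L (m + n)) :
    (∀ m n k : ℤ, mul (L m) (br (L n) (L k)) =
        br (mul (L m) (L n)) (L k) + br (L n) (mul (L m) (L k))) ↔ IsWittDerivation φ := by
  refine forall₃_congr fun m n k => ?_
  simp only [hbr, hmul, map_smul, LinearMap.smul_apply, smul_smul]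
  rw [← add_assoc, ← add_assoc, add_comm n m, ← add_smul, smul_L_inj]
  push_cast
  constructor <;> intro h <;> linear_combination h

theorem stmt2 (br mul : W →ₗ[ℂ] W →ₗ[ℂ] W)
    (hbr : ∀ m n : ℤ, br (L m) (L n) = (m - n : ℂ) • L (m + n))
    (φ : ℤ → ℤ → ℂ)
    (hmul : ∀ m n : ℤ, mul (L m) (L n) = φ m n • L (m + n)) :
    IsPostLie br mul ↔
      ∃ f : ℤ → ℂ, (∀ m n : ℤ, φ m n = (m - n : ℂ) * f m) ∧ EqE f := by
  rw [isPostLie_iff_forall_L, forall_mul_br_L_iff hbr hmul, forall_mul_L_br_iff hbr hmul,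
    isWittDerivation_iff]
  constructor
  · rintro ⟨h1, f, hf⟩
    exact ⟨f, hf, (forall_mul_br_coeff_iff_eqE hf).1 h1⟩
  · rintro ⟨f, hf, hE⟩
    exact ⟨(forall_mul_br_coeff_iff_eqE hf).2 hE, f, hf⟩
end
end

section
/- Let φ₁, φ₂ : ℤ × ℤ → ℂ and define bilinear products ∘₁, ∘₂ on the Witt algebra W by L_m ∘ᵢ L_n = φᵢ(m, n)·L_{m+n}. Let τ : W → W be the Lie algebra automorphism determined by τ(L_m) = −L_{−m} for all m ∈ ℤ. Suppose (W, [·,·], ∘₁) is a post-Lie algebra. Then (W, [·,·], ∘₂) is a post-Lie algebra and τ(x ∘₁ y) = τ(x) ∘₂ τ(y) for all x, y ∈ W, if and only if φ₂(m, n) = −φ₁(−m, −n) for all m, n ∈ ℤ. -/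
noncomputable section

/-!
Write `τ` for the involution `L m ↦ -L (-m)`. On basis vectors, `τ (L m ∘₁ L n) = τ L m ∘₂ τ L n`
reads `φ₂ (-m) (-n) = -φ₁ m n`, so by bilinearity the compatibility of `τ` with the two products is
exactly the stated relation. The bracket `φ(m, n) = m - n` satisfies this relation with itself, so
`τ` is a Lie automorphism; then `∘₂ = τ ∘ ∘₁ ∘ (τ⁻¹ × τ⁻¹)` is the transport of the post-Lie
product `∘₁` along `τ`, hence is post-Lie as well.
-/

lemma L_ne_zero (k : ℤ) : L k ≠ 0 :=
  Finsupp.single_ne_zero.mpr one_ne_zero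

lemma smul_L_injective (k : ℤ) : Function.Injective fun a : ℂ => a • L k :=
  smul_left_injective ℂ (L_ne_zero k)

lemma bilin_ext_L {F G : W →ₗ[ℂ] W →ₗ[ℂ] W}
    (h : ∀ m n : ℤ, F (L m) (L n) = G (L m) (L n)) : F = G :=
  Finsupp.basisSingleOne.ext fun m => Finsupp.basisSingleOne.ext fun n => by
    simpa [Finsupp.coe_basisSingleOne, L] using h m n

lemma map_mul_eq_mul_map_iff {φ₁ φ₂ : ℤ → ℤ → ℂ} {mul₁ mul₂ : W →ₗ[ℂ] W →ₗ[ℂ] W}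
    (hmul₁ : ∀ m n : ℤ, mul₁ (L m) (L n) = φ₁ m n • L (m + n))
    (hmul₂ : ∀ m n : ℤ, mul₂ (L m) (L n) = φ₂ m n • L (m + n))
    {τ : W →ₗ[ℂ] W} (hτ : ∀ m : ℤ, τ (L m) = -L (-m)) :
    (∀ x y : W, τ (mul₁ x y) = mul₂ (τ x) (τ y)) ↔ ∀ m n : ℤ, φ₂ m n = -φ₁ (-m) (-n) := by
  have on_L (m n : ℤ) :
      τ (mul₁ (L m) (L n)) = mul₂ (τ (L m)) (τ (L n)) ↔ φ₂ (-m) (-n) = -φ₁ m n := by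
    simp only [hmul₁, hτ, map_smul, map_neg, LinearMap.neg_apply, neg_neg, hmul₂, smul_neg,
      ← neg_smul, neg_add, eq_comm (a := -(φ₁ m n) • _)]
    exact (smul_L_injective _).eq_iff
  constructor
  · intro h m n
    simpa using (on_L (-m) (-n)).mp (h _ _)
  · intro h
    have : mul₁.compr₂ τ = mul₂.compl₁₂ τ τ :=
      bilin_ext_L fun m n => (on_L m n).mpr (by simpa using h (-m) (-n))
    exact LinearMap.congr_fun₂ this

lemma IsPostLie.of_map_mul_eq {br mul₁ mul₂ : W →ₗ[ℂ] W →ₗ[ℂ] W} (τ : W ≃ₗ[ℂ] W)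
    (hbr : ∀ x y : W, τ (br x y) = br (τ x) (τ y))
    (hmul : ∀ x y : W, τ (mul₁ x y) = mul₂ (τ x) (τ y)) (h₁ : IsPostLie br mul₁) :
    IsPostLie br mul₂ :=
  ⟨τ.surjective.forall₃.mpr fun x y z => by simp only [← hbr, ← hmul, ← map_sub, h₁.1 x y z],
    τ.surjective.forall₃.mpr fun x y z => by simp only [← hbr, ← hmul, ← map_add, h₁.2 x y z]⟩

theorem stmt3 (br : W →ₗ[ℂ] W →ₗ[ℂ] W)
    (hbr : ∀ m n : ℤ, br (L m) (L n) = (m - n : ℂ) • L (m + n))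
    (φ₁ φ₂ : ℤ → ℤ → ℂ) (mul₁ mul₂ : W →ₗ[ℂ] W →ₗ[ℂ] W)
    (hmul₁ : ∀ m n : ℤ, mul₁ (L m) (L n) = φ₁ m n • L (m + n))
    (hmul₂ : ∀ m n : ℤ, mul₂ (L m) (L n) = φ₂ m n • L (m + n))
    (τ : W ≃ₗ[ℂ] W) (hτ : ∀ m : ℤ, τ (L m) = -L (-m))
    (h₁ : IsPostLie br mul₁) :
    (IsPostLie br mul₂ ∧ ∀ x y : W, τ (mul₁ x y) = mul₂ (τ x) (τ y)) ↔
      (∀ m n : ℤ, φ₂ m n = -φ₁ (-m) (-n)) := by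
  have hmul := map_mul_eq_mul_map_iff hmul₁ hmul₂ (τ := τ.toLinearMap) hτ
  have hτ_br : ∀ x y : W, τ (br x y) = br (τ x) (τ y) :=
    (map_mul_eq_mul_map_iff hbr hbr (τ := τ.toLinearMap) hτ).mpr fun m n => by
      push_cast
      ring
  refine ⟨fun h => hmul.mp h.2, fun h => ?_⟩
  have hτ_mul := hmul.mpr h
  exact ⟨h₁.of_map_mul_eq τ hτ_br hτ_mul, hτ_mul⟩
end
end

section
/- A function f : ℤ → ℂ satisfies equation (E) if and only if f is one of the following eight functions: (P1) f(m) = 0 for all m; (P2) f(m) = −1 for all m; (P3ᵃ) f(m) = −1 for all m > 0, f(0) = a, and f(m) = 0 for all m < 0, for some a ∈ ℂ; (P4ᵃ) f(m) = 0 for all m > 0, f(0) = a, and f(m) = −1 for all m < 0, for some a ∈ ℂ; (P5) f(m) = −1 for all m ≥ 2 and f(m) = 0 for all m ≤ 1; (P6) f(m) = 0 for all m ≥ 2 and f(m) = −1 for all m ≤ 1; (P7) f(m) = −1 for all m ≤ −2 and f(m) = 0 for all m ≥ −1; (P8) f(m) = 0 for all m ≤ −2 and f(m) = −1 for all m ≥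 −1. -/
noncomputable section

/-- The eight functions `f` of Theorem 2.6 (types `P1`–`P8`). -/
def IsGradedType (f : ℤ → ℂ) : Prop :=
  (∀ m : ℤ, f m = 0) ∨
  (∀ m : ℤ, f m = -1) ∨
  (∃ a : ℂ, (∀ m : ℤ, 0 < m → f m = -1) ∧ f 0 = a ∧ (∀ m : ℤ, m < 0 → f m = 0)) ∨
  (∃ a : ℂ, (∀ m : ℤ, 0 < m → f m = 0) ∧ f 0 = a ∧ (∀ m : ℤ, m < 0 → f m = -1)) ∨
  ((∀ m : ℤ, 2 ≤ m → f m = -1) ∧ (∀ m : ℤ, m ≤ 1 → f m = 0)) ∨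
  ((∀ m : ℤ, 2 ≤ m → f m = 0) ∧ (∀ m : ℤ, m ≤ 1 → f m = -1)) ∨
  ((∀ m : ℤ, m ≤ -2 → f m = -1) ∧ (∀ m : ℤ, -1 ≤ m → f m = 0)) ∨
  ((∀ m : ℤ, m ≤ -2 → f m = 0) ∧ (∀ m : ℤ, -1 ≤ m → f m = -1))

/-!
For `m ≠ n`, equation (E) says `f (m + n) * (1 + f m + f n) = f m * f n`. Taking `n = 0` forces
`f m ∈ {0, -1}` for `m ≠ 0`; for such values the equation holds automatically when `f m ≠ f n`
(both sides vanish) and says `f (m + n) = f m` when `f m = f n`. So (E) means that `f` colours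
`ℤ ∖ {0}` with the two colours `0` and `-1`, each colour class closed under sums of two distinct
elements, where a sum `0` forces `f 0` to be the common colour. Such a colouring is determined by
whether `f 1 = f 2` and whether `f (-1) = f (-2)`: an equality propagates one colour along a
half-line, an inequality pins the colour of `±1` to that of `∓1`, and both inequalities together
are contradictory (`3 + (-2) = 1`).
-/

theorem mul_one_add_add_eq_mul_iff {R : Type*} [CommRing R] {x y z : R} (hx : x = 0 ∨ x = -1)
    (hy : y = 0 ∨ y = -1) : z * (1 + x + y) = x * y ↔ (x = y → z = x) := by
  rcases hx with rfl | rfl <;> rcases hy with rfl | rfl <;> norm_num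
  · exact fun h => (subsingleton_of_zero_eq_one h.symm).elim _ _
  · exact fun h => (subsingleton_of_zero_eq_one h.symm).elim _ _
  · exact neg_eq_iff_eq_neg

theorem eqE_iff_forall_ne {f : ℤ → ℂ} :
    EqE f ↔ ∀ m n, m ≠ n → f (m + n) * (1 + f m + f n) = f m * f n := by
  refine forall₂_congr fun m n => ⟨fun h hmn => ?_, fun h => ?_⟩
  · have hmn' : (m - n : ℂ) ≠ 0 := by rwa [sub_ne_zero, Ne, Int.cast_inj]
    linear_combination (mul_eq_zero.mp h).resolve_left hmn'
  · rcases eq_or_ne m n with rfl | hmn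
    · simp
    · linear_combination (m - n : ℂ) * h hmn

/-- The case `m + n = 0` of `add_eq` is the condition on `f 0`. -/
structure IsSumClosedColouring (f : ℤ → ℂ) : Prop where
  eq_zero_or_eq_neg_one : ∀ k, k ≠ 0 → f k = 0 ∨ f k = -1
  add_eq : ∀ m n, m ≠ n → m ≠ 0 → n ≠ 0 → f m = f n → f (m + n) = f m

theorem eqE_iff_isSumClosedColouring {f : ℤ → ℂ} : EqE f ↔ IsSumClosedColouring f := by
  rw [eqE_iff_forall_ne]
  constructor
  · intro h
    have h01 : ∀ k, k ≠ 0 → f k = 0 ∨ f k = -1 := by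
      intro k hk
      have hk0 := h k 0 hk
      rw [add_zero] at hk0
      replace hk0 : f k * (1 + f k) = 0 := by linear_combination hk0
      rcases mul_eq_zero.mp hk0 with h' | h'
      · exact .inl h'
      · exact .inr (by linear_combination h')
    exact ⟨h01, fun m n hmn hm hn =>
      (mul_one_add_add_eq_mul_iff (h01 m hm) (h01 n hn)).mp (h m n hmn)⟩
  · rintro ⟨h01, hadd⟩ m n hmn
    rcases eq_or_ne m 0 with rfl | hm
    · rw [zero_add]; rcases h01 n hmn.symm with h | h <;> rw [h] <;> ring
    rcases eq_or_ne n 0 with rfl | hn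
    · rw [add_zero]; rcases h01 m hm with h | h <;> rw [h] <;> ring
    exact (mul_one_add_add_eq_mul_iff (h01 m hm) (h01 n hn)).mpr (hadd m n hmn hm hn)

section Recognition

variable {f : ℤ → ℂ} {c : ℂ}

theorem isGradedType_of_const (hc : c = 0 ∨ c = -1) (h : ∀ m, f m = c) : IsGradedType f := by
  rcases hc with rfl | rfl
  · exact .inl h
  · exact .inr (.inl h)

theorem isGradedType_of_pos_neg (hc : c = 0 ∨ c = -1) (hpos : ∀ m, 0 < m → f m = c)
    (hneg : ∀ m, m < 0 → f m = -1 - c) : IsGradedType f := by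
  rcases hc with rfl | rfl <;> norm_num at hneg
  · exact .inr (.inr (.inr (.inl ⟨f 0, hpos, rfl, hneg⟩)))
  · exact .inr (.inr (.inl ⟨f 0, hpos, rfl, hneg⟩))

theorem isGradedType_of_ge_two (hc : c = 0 ∨ c = -1) (hge : ∀ m, 2 ≤ m → f m = c)
    (hle : ∀ m, m ≤ 1 → f m = -1 - c) : IsGradedType f := by
  rcases hc with rfl | rfl <;> norm_num at hle
  · exact .inr (.inr (.inr (.inr (.inr (.inl ⟨hge, hle⟩)))))
  · exact .inr (.inr (.inr (.inr (.inl ⟨hge, hle⟩))))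

theorem isGradedType_of_le_neg_two (hc : c = 0 ∨ c = -1) (hle : ∀ m, m ≤ -2 → f m = c)
    (hge : ∀ m, -1 ≤ m → f m = -1 - c) : IsGradedType f := by
  rcases hc with rfl | rfl <;> norm_num at hge
  · exact .inr (.inr (.inr (.inr (.inr (.inr (.inr ⟨hle, hge⟩))))))
  · exact .inr (.inr (.inr (.inr (.inr (.inr (.inl ⟨hle, hge⟩))))))

theorem IsGradedType.isSumClosedColouring (h : IsGradedType f) : IsSumClosedColouring f := by
  constructor
  · intro k hk
    rcases h with h | h | ⟨a, h⟩ | ⟨a, h⟩ | h | h | h | h <;> grind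
  · intro m n hmn hm hn hf
    rcases h with h | h | ⟨a, h⟩ | ⟨a, h⟩ | h | h | h | h <;> grind

end Recognition

namespace IsSumClosedColouring

variable {f : ℤ → ℂ}

theorem comp_neg (hf : IsSumClosedColouring f) : IsSumClosedColouring fun m => f (-m) where
  eq_zero_or_eq_neg_one k hk := hf.eq_zero_or_eq_neg_one (-k) (neg_ne_zero.mpr hk)
  add_eq m n hmn hm hn h := by
    simpa only [neg_add] using hf.add_eq (-m) (-n) (neg_injective.ne hmn) (neg_ne_zero.mpr hm)
      (neg_ne_zero.mpr hn) h

theorem zero_eq (hf : IsSumClosedColouring f) {k : ℤ} (hk : k ≠ 0) (h : f k = f (-k)) :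
    f 0 = f k := by
  simpa using hf.add_eq k (-k) (by omega) hk (by omega) h

theorem eq_or_eq_of_ne (hf : IsSumClosedColouring f) {j k l : ℤ} (hj : j ≠ 0) (hk : k ≠ 0)
    (hl : l ≠ 0) (hkl : f k ≠ f l) : f j = f k ∨ f j = f l := by
  rcases hf.eq_zero_or_eq_neg_one j hj with h | h <;>
    rcases hf.eq_zero_or_eq_neg_one k hk with h' | h' <;>
    rcases hf.eq_zero_or_eq_neg_one l hl with h'' | h'' <;> simp_all

theorem eq_neg_one_sub_of_ne (hf : IsSumClosedColouring f) {k l : ℤ} (hk : k ≠ 0) (hl : l ≠ 0)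
    (hkl : f k ≠ f l) : f l = -1 - f k := by
  rcases hf.eq_zero_or_eq_neg_one k hk with h | h <;>
    rcases hf.eq_zero_or_eq_neg_one l hl with h' | h' <;> simp_all

theorem eq_one_of_one_eq_two (hf : IsSumClosedColouring f) (h : f 1 = f 2) :
    ∀ n, 1 ≤ n → f n = f 1 := by
  refine Int.leInduction rfl fun n hn ih => ?_
  rcases hn.eq_or_lt with rfl | hn
  · exact h.symm
  · rw [add_comm, hf.add_eq 1 n hn.ne one_ne_zero (by omega) ih.symm]

theorem neg_one_eq_one (hf : IsSumClosedColouring f) (h : f 1 ≠ f 2) : f (-1) = f 1 := by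
  refine (hf.eq_or_eq_of_ne (by norm_num) one_ne_zero two_ne_zero h).resolve_right fun h' => h ?_
  simpa using hf.add_eq 2 (-1) (by norm_num) two_ne_zero (by norm_num) h'.symm

theorem eq_two_of_one_ne_two (hf : IsSumClosedColouring f) (h : f 1 ≠ f 2) :
    ∀ n, 2 ≤ n → f n = f 2 := by
  refine Int.leInduction rfl fun n hn ih => ?_
  refine (hf.eq_or_eq_of_ne (by omega) one_ne_zero two_ne_zero h).resolve_left fun h' => h ?_
  have := hf.add_eq (n + 1) (-1) (by omega) (by omega) (by norm_num)
    (h'.trans (hf.neg_one_eq_one h).symm)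
  rw [add_neg_cancel_right] at this
  rw [← h', ← this, ih]

theorem eq_neg_one_of_neg_one_eq_neg_two (hf : IsSumClosedColouring f) (h : f (-1) = f (-2)) :
    ∀ n, n ≤ -1 → f n = f (-1) := fun n hn => by
  simpa using hf.comp_neg.eq_one_of_one_eq_two h (-n) (by omega)

theorem one_eq_neg_one (hf : IsSumClosedColouring f) (h : f (-1) ≠ f (-2)) : f 1 = f (-1) := by
  simpa using hf.comp_neg.neg_one_eq_one h

theorem eq_neg_two_of_neg_one_ne_neg_two (hf : IsSumClosedColouring f) (h : f (-1) ≠ f (-2)) :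
    ∀ n, n ≤ -2 → f n = f (-2) := fun n hn => by
  simpa using hf.comp_neg.eq_two_of_one_ne_two h (-n) (by omega)

theorem one_eq_two_or_neg_one_eq_neg_two (hf : IsSumClosedColouring f) :
    f 1 = f 2 ∨ f (-1) = f (-2) := by
  by_contra! ⟨h, h'⟩
  have h3 := hf.eq_two_of_one_ne_two h 3 (by norm_num)
  have hm2 : f (-2) = f 2 :=
    (hf.eq_or_eq_of_ne (by norm_num) one_ne_zero two_ne_zero h).resolve_left fun h'' =>
      h' ((hf.neg_one_eq_one h).trans h''.symm)
  have := hf.add_eq 3 (-2) (by norm_num) (by norm_num) (by norm_num) (h3.trans hm2.symm)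
  norm_num at this
  exact h (this.trans h3)

theorem isGradedType (hf : IsSumClosedColouring f) : IsGradedType f := by
  have h01 := hf.eq_zero_or_eq_neg_one
  rcases em (f 1 = f 2) with h12 | h12 <;> rcases em (f (-1) = f (-2)) with h12' | h12'
  · have hpos := hf.eq_one_of_one_eq_two h12
    have hneg := hf.eq_neg_one_of_neg_one_eq_neg_two h12'
    by_cases h : f 1 = f (-1)
    · refine isGradedType_of_const (h01 1 one_ne_zero) fun m => ?_
      rcases lt_trichotomy m 0 with hm | rfl | hm
      · rw [hneg m (by omega), h]
      · exact hf.zero_eq one_ne_zero h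
      · exact hpos m hm
    · refine isGradedType_of_pos_neg (h01 1 one_ne_zero) hpos fun m hm => ?_
      rw [hneg m (by omega), hf.eq_neg_one_sub_of_ne one_ne_zero (by norm_num) h]
  · have h11 := hf.one_eq_neg_one h12'
    refine isGradedType_of_le_neg_two (h01 (-2) (by norm_num))
      (hf.eq_neg_two_of_neg_one_ne_neg_two h12') fun m hm => ?_
    rw [← hf.eq_neg_one_sub_of_ne (by norm_num) (by norm_num) (Ne.symm h12')]
    rcases lt_trichotomy m 0 with hm' | rfl | hm'
    · rw [show m = -1 by omega]
    · rw [hf.zero_eq one_ne_zero h11, h11]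
    · rw [hf.eq_one_of_one_eq_two h12 m hm', h11]
  · have h11 := hf.neg_one_eq_one h12
    refine isGradedType_of_ge_two (h01 2 two_ne_zero) (hf.eq_two_of_one_ne_two h12) fun m hm => ?_
    rw [← hf.eq_neg_one_sub_of_ne two_ne_zero one_ne_zero (Ne.symm h12)]
    rcases lt_trichotomy m 0 with hm' | rfl | hm'
    · rw [hf.eq_neg_one_of_neg_one_eq_neg_two h12' m (by omega), h11]
    · exact hf.zero_eq one_ne_zero h11.symm
    · rw [show m = 1 by omega]
  · exact (hf.one_eq_two_or_neg_one_eq_neg_two.elim h12 h12').elim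

end IsSumClosedColouring

theorem stmt4 (f : ℤ → ℂ) : EqE f ↔ IsGradedType f :=
  eqE_iff_isSumClosedColouring.trans
    ⟨IsSumClosedColouring.isGradedType, IsGradedType.isSumClosedColouring⟩
end
end

section
/- Let φ : ℤ × ℤ → ℂ and define a bilinear product ∘ on the Witt algebra W by L_m ∘ L_n = φ(m, n)·L_{m+n}. Then (W, [·,·], ∘) is a post-Lie algebra if and only if φ(m, n) = (m − n)·f(m) for all m, n ∈ ℤ, where f : ℤ → ℂ is one of the following eight functions: (P1) f ≡ 0; (P2) f ≡ −1; (P3ᵃ) f(m) = −1 for m > 0, f(0) = a, f(m) = 0 for m < 0, for some a ∈ ℂ; (P4ᵃ) f(m) = 0 for m > 0, f(0) = a, f(m) = −1 for m < 0, for some a ∈ ℂ; (P5) f(m) = −1 for m ≥ 2, f(m) = 0 for m ≤ 1; (P6) f(m) = 0 for m ≥ 2, f(m) = −1 for m ≤ 1; (P7) f(m) = −1 for m ≤ −2, f(m) = 0 for m ≥ −1; (P8) f(m) = 0 for m ≤ −2, f(m) = −1 for m ≥ −1. -/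
/-!
On basis vectors both post-Lie axioms become identities between the coefficients `φ m n`.
The second one says that `L m ∘ ·` is a derivation of `W`; at `p = 0` it gives
`m φ(m, n) = (m - n) φ(m, 0)`, and at `m = 0` it makes `φ 0` additive on distinct arguments,
hence linear, so `φ m n = (m - n) f m`. Substituting this into the first axiom leaves exactly
equation (E): away from `0`, `f` takes only the values `0` and `-1`, and each of the two level
sets is closed under sums of distinct integers. The symmetries `f ↦ -1 - f` and
`f ↦ f ∘ Neg.neg` reduce the classification to `f 1 = 0`; then `f (-1) = -1` propagates to
type P4, while `f (-1) = 0` makes `f` constant on `[2, ∞)` and on `(-∞, -2]`, giving P1, P5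
or P7. Conversely, each non-constant one of the eight functions is, possibly after reflection,
`0` below and `-1` from a threshold `t ∈ [-1, 2]` on (except perhaps at `0`); this window is
exactly where both level sets stay closed.
-/
noncomputable section

theorem Finsupp.trilinear_ext {R ι M : Type*} [CommSemiring R] [AddCommMonoid M] [Module R M]
    {T T' : (ι →₀ R) →ₗ[R] (ι →₀ R) →ₗ[R] (ι →₀ R) →ₗ[R] M}
    (h : ∀ a b c, T (single a 1) (single b 1) (single c 1) =
      T' (single a 1) (single b 1) (single c 1)) :
    T = T' := by
  ext a b c
  exact h a b c

/-- The coefficient of `L (m + n + p)` in the first post-Lie axiom at `L m, L n, L p`. -/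
def BracketRule (φ : ℤ → ℤ → ℂ) : Prop := ∀ m n p : ℤ,
  (m - n : ℂ) * φ (m + n) p =
    φ n p * φ m (n + p) - φ m p * φ n (m + p) - (φ m n - φ n m) * φ (m + n) p

/-- The coefficient of `L (m + n + p)` in the second post-Lie axiom at `L m, L n, L p`. -/
def DerivationRule (φ : ℤ → ℤ → ℂ) : Prop := ∀ m n p : ℤ,
  (n - p : ℂ) * φ m (n + p) = (m + n - p : ℂ) * φ m n + (n - m - p : ℂ) * φ m p

lemma smul_L_apply_of_eq (c : ℂ) {k k' : ℤ} (h : k = k') : (c • L k) k' = c := by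
  simp [L, h]

section StructureConstants

variable {br mul : W →ₗ[ℂ] W →ₗ[ℂ] W} {φ : ℤ → ℤ → ℂ}
  (hbr : ∀ m n : ℤ, br (L m) (L n) = (m - n : ℂ) • L (m + n))
  (hmul : ∀ m n : ℤ, mul (L m) (L n) = φ m n • L (m + n))
include hbr hmul

open LinearMap

theorem bracketRule_iff :
    (∀ x y z : W, mul (br x y) z =
      mul x (mul y z) - mul y (mul x z) - mul (mul x y - mul y x) z) ↔ BracketRule φ := by
  refine ⟨fun h m n p => ?_, fun h x y z => ?_⟩
  · have e := congr($(h (L m) (L n) (L p)) (m + n + p))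
    simp only [hbr, hmul, map_smul, map_sub, LinearMap.smul_apply, LinearMap.sub_apply, smul_smul,
      Finsupp.sub_apply] at e
    simp (disch := omega) only [smul_L_apply_of_eq] at e
    rw [add_comm n m] at e
    linear_combination e
  -- `C x y = mul x ∘ₗ mul y`
  set C := ((llcomp ℂ W W W).comp mul).compl₂ mul
  have key : br.compr₂ mul + C.flip + mul.compr₂ mul = C + mul.flip.compr₂ mul := by
    refine Finsupp.trilinear_ext fun a b c => ?_
    simp only [C, compr₂_apply, compl₂_apply, llcomp_apply, flip_apply, LinearMap.add_apply,
      comp_apply, ← L.eq_1]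
    simp only [hbr, hmul, map_smul, LinearMap.smul_apply, smul_smul]
    rw [show b + (a + c) = a + b + c by ring, show a + (b + c) = a + b + c by ring, add_comm b a,
      ← add_smul, ← add_smul, ← add_smul]
    congr 1
    linear_combination h a b c
  have := congr($key x y z)
  simp only [C, compr₂_apply, compl₂_apply, llcomp_apply, flip_apply, LinearMap.add_apply,
    comp_apply] at this
  rw [map_sub, LinearMap.sub_apply]
  linear_combination (norm := abel) this

theorem derivationRule_iff :
    (∀ x y z : W, mul x (br y z) = br (mul x y) z + br y (mul x z)) ↔ DerivationRule φ := by
  refine ⟨fun h m n p => ?_, fun h x y z => ?_⟩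
  · have e := congr($(h (L m) (L n) (L p)) (m + n + p))
    simp only [hbr, hmul, map_smul, LinearMap.smul_apply, smul_smul, Finsupp.add_apply] at e
    simp (disch := omega) only [smul_L_apply_of_eq] at e
    push_cast at e
    linear_combination e
  have key : ((llcomp ℂ W W W).comp mul).compl₂ br =
      mul.compr₂ br + (((llcomp ℂ W W W).comp br).compl₂ mul).flip := by
    refine Finsupp.trilinear_ext fun a b c => ?_
    simp only [compl₂_apply, llcomp_apply, flip_apply, LinearMap.add_apply, comp_apply,
      compr₂_apply, ← L.eq_1]
    simp only [hbr, hmul, map_smul, LinearMap.smul_apply, smul_smul]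
    rw [show a + (b + c) = a + b + c by ring, show b + (a + c) = a + b + c by ring, ← add_smul]
    congr 1
    push_cast
    linear_combination h a b c
  simpa only [compr₂_apply, compl₂_apply, llcomp_apply, flip_apply, LinearMap.add_apply,
    comp_apply] using congr($key x y z)

theorem isPostLie_iff : IsPostLie br mul ↔ BracketRule φ ∧ DerivationRule φ :=
  and_congr (bracketRule_iff hbr hmul) (derivationRule_iff hbr hmul)

end StructureConstants

theorem Int.eq_zsmul_of_map_add_of_ne {G : Type*} [AddCommGroup G] {g : ℤ → G}
    (hg : ∀ m n, m ≠ n → g (m + n) = g m + g n) (n : ℤ) : g n = n • g 1 := by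
  have h0 : g 0 = 0 := by simpa using hg 0 1 (by norm_num)
  have hle : ∀ n ≤ 1, g n = n • g 1 := by
    intro n hn
    induction n, hn using Int.leInductionDown with
    | base => rw [one_smul]
    | pred k hk ih =>
      have := hg (k - 1) 1 (by omega)
      rw [sub_add_cancel, ih] at this
      rw [sub_smul, one_smul, this, add_sub_cancel_right]
  rcases le_or_gt n 1 with hn | hn
  · exact hle n hn
  · have := hg n (-n) (by omega)
    rw [add_neg_cancel, h0, hle (-n) (by omega), neg_smul] at this
    exact add_neg_eq_zero.1 this.symm

theorem DerivationRule.exists_eq_mul {φ : ℤ → ℤ → ℂ} (h : DerivationRule φ) :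
    ∃ f : ℤ → ℂ, ∀ m n, φ m n = (m - n : ℂ) * f m := by
  suffices ∀ m, ∃ c : ℂ, ∀ n, φ m n = (m - n : ℂ) * c by
    choose f hf using this
    exact ⟨f, hf⟩
  intro m
  rcases eq_or_ne m 0 with rfl | hm
  · have hadd : ∀ n p, n ≠ p → φ 0 (n + p) = φ 0 n + φ 0 p := by
      intro n p hnp
      have := h 0 n p
      rw [Int.cast_zero, zero_add, sub_zero, ← mul_add] at this
      exact mul_left_cancel₀ (sub_ne_zero.2 (Int.cast_injective.ne hnp)) this
    refine ⟨-φ 0 1, fun n => ?_⟩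
    rw [Int.eq_zsmul_of_map_add_of_ne hadd n, zsmul_eq_mul]
    push_cast; ring
  · refine ⟨φ m 0 / m, fun n => ?_⟩
    have := h m n 0
    simp only [add_zero, Int.cast_zero, sub_zero] at this
    field_simp
    linear_combination -this

theorem derivationRule_of_eq_mul {φ : ℤ → ℤ → ℂ} {f : ℤ → ℂ}
    (hφ : ∀ m n, φ m n = (m - n : ℂ) * f m) : DerivationRule φ := by
  intro m n p
  simp only [hφ]
  push_cast
  ring

theorem bracketRule_iff_eqE {φ : ℤ → ℤ → ℂ} {f : ℤ → ℂ}
    (hφ : ∀ m n, φ m n = (m - n : ℂ) * f m) : BracketRule φ ↔ EqE f := by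
  refine ⟨fun h m n => ?_, fun hE m n p => ?_⟩
  · have := h m n (m + n - 1)
    simp only [hφ] at this
    push_cast at this
    linear_combination this
  · simp only [hφ]
    push_cast
    linear_combination ((m : ℂ) + n - p) * hE m n

theorem IsGradedType.of_dual {f : ℤ → ℂ} (h : IsGradedType fun m => -1 - f m) :
    IsGradedType f := by
  have hz : ∀ m, -1 - f m = 0 ↔ f m = -1 := fun m => by rw [sub_eq_zero, eq_comm]
  have hn : ∀ m, -1 - f m = -1 ↔ f m = 0 := fun m => sub_eq_self
  simp only [IsGradedType, hz, hn, exists_and_left, exists_and_right, exists_eq', true_and] at h ⊢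
  tauto

namespace EqE

variable {f : ℤ → ℂ}

theorem eq_zero_or_eq_neg_one (hE : EqE f) {m : ℤ} (hm : m ≠ 0) : f m = 0 ∨ f m = -1 := by
  have h := hE m 0
  rw [add_zero, Int.cast_zero, sub_zero] at h
  have : f m * (f m + 1) = 0 := by
    linear_combination (mul_eq_zero.mp h).resolve_left (Int.cast_ne_zero.2 hm)
  rcases mul_eq_zero.mp this with h | h
  · exact .inl h
  · exact .inr (eq_neg_of_add_eq_zero_left h)

theorem add_eq_zero (hE : EqE f) {m n : ℤ} (hmn : m ≠ n) (hm : f m = 0) (hn : f n = 0) :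
    f (m + n) = 0 := by
  have h := hE m n
  rw [hm, hn] at h
  linear_combination (mul_eq_zero.mp h).resolve_left (sub_ne_zero.2 (Int.cast_injective.ne hmn))

theorem add_eq_neg_one (hE : EqE f) {m n : ℤ} (hmn : m ≠ n) (hm : f m = -1) (hn : f n = -1) :
    f (m + n) = -1 := by
  have h := hE m n
  rw [hm, hn] at h
  linear_combination -(mul_eq_zero.mp h).resolve_left (sub_ne_zero.2 (Int.cast_injective.ne hmn))

theorem dual (hE : EqE f) : EqE fun m => -1 - f m := fun m n => by
  linear_combination hE m n

theorem comp_neg (hE : EqE f) : EqE fun m => f (-m) := fun m n => by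
  have h := hE (-m) (-n)
  rw [← neg_add, Int.cast_neg, Int.cast_neg] at h
  linear_combination -h

theorem apply_eq_zero_of_pos (hE : EqE f) (h1 : f 1 = 0) (hm1 : f (-1) = -1) {m : ℤ}
    (hm : 0 < m) : f m = 0 := by
  induction m, (hm : 1 ≤ m) using Int.leInduction with
  | base => exact h1
  | succ k hk ih =>
    refine (hE.eq_zero_or_eq_neg_one (by omega)).resolve_right fun hk1 => ?_
    have := hE.add_eq_neg_one (by omega : k + 1 ≠ -1) hk1 hm1
    rw [add_neg_cancel_right, ih] at this
    norm_num at this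

theorem apply_add_one_eq (hE : EqE f) (h1 : f 1 = 0) (hm1 : f (-1) = 0) {k : ℤ} (hk : 2 ≤ k) :
    f (k + 1) = f k := by
  rcases hE.eq_zero_or_eq_neg_one (by omega : k ≠ 0) with h | h
  · rw [h, hE.add_eq_zero (by omega) h h1]
  rcases hE.eq_zero_or_eq_neg_one (by omega : k + 1 ≠ 0) with h' | h'
  · have := hE.add_eq_zero (by omega : k + 1 ≠ -1) h' hm1
    rw [add_neg_cancel_right, h] at this
    norm_num at this
  · rw [h, h']

theorem apply_eq_apply_two (hE : EqE f) (h1 : f 1 = 0) (hm1 : f (-1) = 0) {k : ℤ} (hk : 2 ≤ k) :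
    f k = f 2 := by
  induction k, hk using Int.leInduction with
  | base => rfl
  | succ k hk ih => rw [hE.apply_add_one_eq h1 hm1 hk, ih]

theorem isGradedType_of_apply_one_eq_zero_of_apply_neg_one_eq_zero (hE : EqE f) (h1 : f 1 = 0)
    (hm1 : f (-1) = 0) : IsGradedType f := by
  have hmid : ∀ m, -1 ≤ m → m ≤ 1 → f m = 0 := by
    intro m hm hm'
    obtain rfl | rfl | rfl : m = -1 ∨ m = 0 ∨ m = 1 := by omega
    exacts [hm1, by simpa using hE.add_eq_zero (by norm_num : (1 : ℤ) ≠ -1) h1 hm1, h1]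
  have hpos : ∀ m, 2 ≤ m → f m = f 2 := fun m => hE.apply_eq_apply_two h1 hm1
  have hneg : ∀ m, m ≤ -2 → f m = f (-2) := fun m hm => by
    simpa using hE.comp_neg.apply_eq_apply_two hm1 h1 (by omega : 2 ≤ -m)
  rcases hE.eq_zero_or_eq_neg_one two_ne_zero with h2 | h2 <;>
    rcases hE.eq_zero_or_eq_neg_one (by norm_num : (-2 : ℤ) ≠ 0) with h2' | h2'
  · refine .inl fun m => ?_
    obtain hm | hm | hm : m ≤ -2 ∨ (-1 ≤ m ∧ m ≤ 1) ∨ 2 ≤ m := by omega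
    exacts [(hneg m hm).trans h2', hmid m hm.1 hm.2, (hpos m hm).trans h2]
  · refine .inr <| .inr <| .inr <| .inr <| .inr <| .inr <| .inl
      ⟨fun m hm => ?_, fun m hm => ?_⟩
    · exact (hneg m hm).trans h2'
    · obtain hm' | hm' : m ≤ 1 ∨ 2 ≤ m := by omega
      exacts [hmid m hm hm', (hpos m hm').trans h2]
  · refine .inr <| .inr <| .inr <| .inr <| .inl ⟨fun m hm => ?_, fun m hm => ?_⟩
    · exact (hpos m hm).trans h2
    · obtain hm' | hm' : m ≤ -2 ∨ -1 ≤ m := by omega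
      exacts [(hneg m hm').trans h2', hmid m hm' hm]
  · have h3 : f 3 = -1 := (hpos 3 (by norm_num)).trans h2
    have := hE.add_eq_neg_one (by norm_num : (3 : ℤ) ≠ -2) h3 h2'
    norm_num [h1] at this

theorem isGradedType_of_apply_one_eq_zero (hE : EqE f) (h1 : f 1 = 0) : IsGradedType f := by
  rcases hE.eq_zero_or_eq_neg_one (by norm_num : (-1 : ℤ) ≠ 0) with hm1 | hm1
  · exact hE.isGradedType_of_apply_one_eq_zero_of_apply_neg_one_eq_zero h1 hm1
  refine .inr <| .inr <| .inr <| .inl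
    ⟨f 0, fun m hm => hE.apply_eq_zero_of_pos h1 hm1 hm, rfl, fun m hm => ?_⟩
  have := hE.comp_neg.dual.apply_eq_zero_of_pos (by simp [hm1]) (by simp [h1]) (neg_pos.2 hm)
  rwa [neg_neg, sub_eq_zero, eq_comm] at this

theorem isGradedType (hE : EqE f) : IsGradedType f := by
  rcases hE.eq_zero_or_eq_neg_one one_ne_zero with h1 | h1
  · exact hE.isGradedType_of_apply_one_eq_zero h1
  · exact .of_dual (hE.dual.isGradedType_of_apply_one_eq_zero (by simp [h1]))

end EqE

theorem eqE_of_levels_add_closed {f : ℤ → ℂ} (h : ∀ m, m ≠ 0 → f m = 0 ∨ f m = -1)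
    (hzero : ∀ m n, m ≠ n → f m = 0 → f n = 0 → f (m + n) = 0)
    (hneg : ∀ m n, m ≠ n → f m = -1 → f n = -1 → f (m + n) = -1) : EqE f := by
  intro m n
  rcases eq_or_ne m n with rfl | hmn
  · rw [sub_self, zero_mul]
  refine mul_eq_zero_of_right _ ?_
  rcases eq_or_ne m 0 with rfl | hm
  · rw [zero_add]
    rcases h n hmn.symm with hn | hn <;> rw [hn] <;> ring
  rcases eq_or_ne n 0 with rfl | hn
  · rw [add_zero]
    rcases h m hm with hm | hm <;> rw [hm] <;> ring
  rcases h m hm with hm | hm <;> rcases h n hn with hn | hn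
  · rw [hzero m n hmn hm hn, hm, hn]; ring
  · rw [hm, hn]; ring
  · rw [hm, hn]; ring
  · rw [hneg m n hmn hm hn, hm, hn]; ring

theorem eqE_of_threshold {f : ℤ → ℂ} {t : ℤ} (ht : -1 ≤ t) (ht' : t ≤ 2)
    (hge : ∀ m, t ≤ m → m ≠ 0 → f m = -1) (hlt : ∀ m, m < t → m ≠ 0 → f m = 0)
    (hneg : t = -1 → f 0 = -1) (hpos : t = 2 → f 0 = 0) : EqE f := by
  refine eqE_of_levels_add_closed (fun m hm => ?_) (fun m n hmn hm hn => ?_)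
    (fun m n hmn hm hn => ?_)
  · rcases le_or_gt t m with h | h
    exacts [.inr (hge m h hm), .inl (hlt m h hm)]
  · rcases eq_or_ne m 0 with rfl | hm0
    · rwa [zero_add]
    rcases eq_or_ne n 0 with rfl | hn0
    · rwa [add_zero]
    have hmt : m < t := not_le.1 fun h => by norm_num [hge m h hm0] at hm
    have hnt : n < t := not_le.1 fun h => by norm_num [hge n h hn0] at hn
    rcases eq_or_ne (m + n) 0 with h | h
    · rw [h]; exact hpos (by omega)
    · exact hlt _ (by omega) h
  · rcases eq_or_ne m 0 with rfl | hm0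
    · rwa [zero_add]
    rcases eq_or_ne n 0 with rfl | hn0
    · rwa [add_zero]
    have hmt : t ≤ m := not_lt.1 fun h => by norm_num [hlt m h hm0] at hm
    have hnt : t ≤ n := not_lt.1 fun h => by norm_num [hlt n h hn0] at hn
    rcases eq_or_ne (m + n) 0 with h | h
    · rw [h]; exact hneg (by omega)
    · exact hge _ (by omega) h

theorem IsGradedType.eqE {f : ℤ → ℂ} (h : IsGradedType f) : EqE f := by
  rcases h with h | h | ⟨-, hp, -, hn⟩ | ⟨-, hp, -, hn⟩ | ⟨hp, hn⟩ | ⟨hp, hn⟩ | ⟨hp, hn⟩ | ⟨hp, hn⟩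
  · intro m n; simp [h]
  · intro m n; norm_num [h]
  · exact eqE_of_threshold (t := 1) (by norm_num) (by norm_num) (fun m hm _ => hp m hm)
      (fun m hm _ => hn m (by omega)) (by norm_num) (by norm_num)
  · simpa using (eqE_of_threshold (f := fun m => f (-m)) (t := 1) (by norm_num) (by norm_num)
      (fun m hm _ => hn _ (by omega)) (fun m hm _ => hp _ (by omega)) (by norm_num)
      (by norm_num)).comp_neg
  · exact eqE_of_threshold (t := 2) (by norm_num) (by norm_num) (fun m hm _ => hp m hm)
      (fun m hm _ => hn m (by omega)) (by norm_num) (fun _ => hn 0 (by norm_num))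
  · simpa using (eqE_of_threshold (f := fun m => f (-m)) (t := -1) (by norm_num) (by norm_num)
      (fun m hm _ => hn _ (by omega)) (fun m hm _ => hp _ (by omega)) (fun _ => hn 0 (by norm_num))
      (by norm_num)).comp_neg
  · simpa using (eqE_of_threshold (f := fun m => f (-m)) (t := 2) (by norm_num) (by norm_num)
      (fun m hm _ => hp _ (by omega)) (fun m hm _ => hn _ (by omega)) (by norm_num)
      (fun _ => hn 0 (by norm_num))).comp_neg
  · exact eqE_of_threshold (t := -1) (by norm_num) (by norm_num) (fun m hm _ => hn m hm)
      (fun m hm _ => hp m (by omega)) (fun _ => hn 0 (by norm_num)) (by norm_num)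

theorem eqE_iff_isGradedType {f : ℤ → ℂ} : EqE f ↔ IsGradedType f :=
  ⟨EqE.isGradedType, IsGradedType.eqE⟩

theorem stmt5 (br mul : W →ₗ[ℂ] W →ₗ[ℂ] W)
    (hbr : ∀ m n : ℤ, br (L m) (L n) = (m - n : ℂ) • L (m + n))
    (φ : ℤ → ℤ → ℂ)
    (hmul : ∀ m n : ℤ, mul (L m) (L n) = φ m n • L (m + n)) :
    IsPostLie br mul ↔
      ∃ f : ℤ → ℂ, (∀ m n : ℤ, φ m n = (m - n : ℂ) * f m) ∧ IsGradedType f := by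
  rw [isPostLie_iff hbr hmul]
  constructor
  · rintro ⟨hB, hD⟩
    obtain ⟨f, hf⟩ := hD.exists_eq_mul
    exact ⟨f, hf, eqE_iff_isGradedType.1 ((bracketRule_iff_eqE hf).1 hB)⟩
  · rintro ⟨f, hf, hg⟩
    exact ⟨(bracketRule_iff_eqE hf).2 (eqE_iff_isGradedType.2 hg), derivationRule_of_eq_mul hf⟩
end
end

section
/- Let f : ℤ → ℂ satisfy equation (E). Then the bilinear bracket defined on the free ℂ-module with basis {L_m : m ∈ ℤ} by {L_m, L_n} := (m − n)·(f(m) + f(n) + 1)·L_{m+n} is a Lie bracket, i.e. it is antisymmetric and satisfies the Jacobi identity. -/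
/-! Both identities are multilinear, so it suffices to check them on the basis `L m`. There
antisymmetry is that of `(m - n) * (f m + f n + 1)`, and the Jacobi identity for `L m, L n, L p`
is a scalar identity: a linear combination of (E) at the pairs `(n, p)`, `(m, p)` and `(m, n)`. -/

noncomputable section

section Bilinear

variable {ι R M : Type*} [CommRing R] [AddCommGroup M] [Module R M]
  (v : Module.Basis ι R M) (b : M →ₗ[R] M →ₗ[R] M)

theorem antisymm_of_basis (h : ∀ i j, b (v i) (v j) = -b (v j) (v i)) (x y : M) :
    b x y = -b y x := by
  have hb : b = -b.flip := v.ext fun i ↦ v.ext fun j ↦ by simpa using h i j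
  exact congr($hb x y)

def jacobiator (x y z : M) : M :=
  b x (b y z) + b y (b z x) + b z (b x y)

theorem jacobiator_rotate (x y z : M) : jacobiator b x y z = jacobiator b y z x := by
  unfold jacobiator; abel

theorem jacobiator_eq_zero_of_basis_left (y z : M) (h : ∀ i, jacobiator b (v i) y z = 0) (x : M) :
    jacobiator b x y z = 0 := by
  have hlin : b.flip (b y z) + b y ∘ₗ b z + b z ∘ₗ b.flip y = 0 :=
    v.ext fun i ↦ by simpa [jacobiator] using h i
  simpa [jacobiator] using congr($hlin x)

/-- By cyclic symmetry, extending from the basis in the first slot extends in every slot. -/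
theorem jacobiator_eq_zero_of_basis (h : ∀ i j k, jacobiator b (v i) (v j) (v k) = 0)
    (x y z : M) :
    jacobiator b x y z = 0 := by
  refine jacobiator_eq_zero_of_basis_left v b y z (fun i ↦ ?_) x
  rw [jacobiator_rotate]
  refine jacobiator_eq_zero_of_basis_left v b z (v i) (fun j ↦ ?_) y
  rw [jacobiator_rotate]
  refine jacobiator_eq_zero_of_basis_left v b (v i) (v j) (fun k ↦ ?_) z
  rw [jacobiator_rotate]
  exact h i j k

end Bilinear

theorem basisSingleOne_eq_L (m : ℤ) : Finsupp.basisSingleOne m = L m := rfl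

section Witt

variable {f : ℤ → ℂ} {b : W →ₗ[ℂ] W →ₗ[ℂ] W}

theorem bracket_L_antisymm
    (hb : ∀ m n : ℤ, b (L m) (L n) = ((m - n : ℂ) * (f m + f n + 1)) • L (m + n))
    (m n : ℤ) : b (L m) (L n) = -b (L n) (L m) := by
  rw [hb, hb, add_comm n m, ← neg_smul]
  congr 1
  ring

theorem jacobiator_L_eq_zero (hf : EqE f)
    (hb : ∀ m n : ℤ, b (L m) (L n) = ((m - n : ℂ) * (f m + f n + 1)) • L (m + n))
    (m n p : ℤ) :
    jacobiator b (L m) (L n) (L p) = 0 := by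
  rw [jacobiator, hb, hb, hb, map_smul, map_smul, map_smul, hb, hb, hb,
    show p + m = m + p from add_comm p m, show n + (m + p) = m + (n + p) by ring,
    show p + (m + n) = m + (n + p) by ring, smul_smul, smul_smul, smul_smul,
    ← add_smul, ← add_smul]
  convert zero_smul ℂ (L (m + (n + p))) using 2
  have hnp := hf n p
  have hmp := hf m p
  have hmn := hf m n
  push_cast at hnp hmp hmn ⊢
  linear_combination ((m : ℂ) - n - p) * hnp + ((m : ℂ) + p - n) * hmp +
    ((p : ℂ) - m - n) * hmn

end Witt

theorem stmt6 (f : ℤ → ℂ) (hf : EqE f) (b : W →ₗ[ℂ] W →ₗ[ℂ] W)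
    (hb : ∀ m n : ℤ,
      b (L m) (L n) = ((m - n : ℂ) * (f m + f n + 1)) • L (m + n)) :
    (∀ x y : W, b x y = -b y x) ∧
    (∀ x y z : W, b x (b y z) + b y (b z x) + b z (b x y) = 0) := by
  refine ⟨antisymm_of_basis Finsupp.basisSingleOne b fun m n ↦ ?_,
    jacobiator_eq_zero_of_basis Finsupp.basisSingleOne b fun m n p ↦ ?_⟩
  · simpa only [basisSingleOne_eq_L] using bracket_L_antisymm hb m n
  · simpa only [basisSingleOne_eq_L] using jacobiator_L_eq_zero hf hb m n p
end
end

section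
/- Let ν be a nonzero integer and f, g : ℤ → ℂ. Suppose either f(m) = 0 for all m ∈ ℤ, or f(m) = −1 for all m ∈ ℤ. If (f, g, ν) satisfy equation (E3), then g(m) = 0 for all m ∈ ℤ. -/
noncomputable section

/-! For constant `f ≡ c` both differences on the right of (E3) vanish, so (E3) collapses to
`(2c + 1)(m - n) g(m + n) = 0`; when `2c + 1 ≠ 0`, writing `k` both as `k + 0` and as
`(k + 1) + (-1)` gives `k g(k) = 0` and `(k + 2) g(k) = 0`, whence `g(k) = 0`. -/

theorem eq_zero_of_forall_sub_mul_add_eq_zero {g : ℤ → ℂ}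
    (hg : ∀ m n : ℤ, (m - n : ℂ) * g (m + n) = 0) (k : ℤ) : g k = 0 := by
  have hk := hg k 0
  have hk' := hg (k + 1) (-1)
  simp only [add_zero, add_neg_cancel_right, Int.cast_zero, Int.cast_add, Int.cast_one,
    Int.cast_neg] at hk hk'
  linear_combination (hk' - hk) / 2

theorem EqE3.sub_mul_add_eq_zero_of_const {ν : ℤ} {f g : ℤ → ℂ} {c : ℂ} (hc : 2 * c + 1 ≠ 0)
    (hf : ∀ m, f m = c) (h3 : EqE3 ν f g) (m n : ℤ) : (m - n : ℂ) * g (m + n) = 0 := by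
  have h := h3 m n
  simp only [hf, sub_self, mul_zero, zero_mul, add_zero] at h
  have h' : (2 * c + 1) * ((m - n : ℂ) * g (m + n)) = 0 := by linear_combination h
  exact (mul_eq_zero.1 h').resolve_left hc

theorem stmt9_general (ν : ℤ) (f g : ℤ → ℂ)
    (hf : (∀ m : ℤ, f m = 0) ∨ (∀ m : ℤ, f m = -1))
    (h3 : EqE3 ν f g) :
    ∀ m : ℤ, g m = 0 := by
  refine eq_zero_of_forall_sub_mul_add_eq_zero ?_
  rcases hf with hf | hf
  · exact h3.sub_mul_add_eq_zero_of_const (by norm_num) hf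
  · exact h3.sub_mul_add_eq_zero_of_const (by norm_num) hf

theorem stmt9 (ν : ℤ) (hν : ν ≠ 0) (f g : ℤ → ℂ)
    (hf : (∀ m : ℤ, f m = 0) ∨ (∀ m : ℤ, f m = -1))
    (h3 : EqE3 ν f g) :
    ∀ m : ℤ, g m = 0 :=
  stmt9_general ν f g hf h3
end
end

section
/- Let ν be a nonzero integer, a ∈ ℂ, and let f : ℤ → ℂ be given by f(m) = −1 for m > 0, f(0) = a, and f(m) = 0 for m < 0. Let g : ℤ → ℂ be such that (f, g, ν) satisfy equations (E2) and (E3). Then: (i) if ν > 0, then g(m) = 0 for all m ≥ 3 and g(m) = 0 for all m ≤ min(−3, −1 − ν); (ii) if ν < 0, then g(m) = 0 for all m ≥ max(3, 1 − ν) and g(m) = 0 for all m ≤ −3. -/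
noncomputable section

/-- Taking `m = 1`, `n = M - 1` in (E3) makes every value of `f` involved equal to `-1`, so the
right-hand side vanishes and the left-hand side is `(M - 2) g(M)`. -/
theorem EqE3.apply_eq_zero_of_pos {ν : ℤ} {f g : ℤ → ℂ} (hfpos : ∀ m : ℤ, 0 < m → f m = -1)
    (h3 : EqE3 ν f g) {M : ℤ} (hM : 3 ≤ M) (hMν : 0 < M + ν) : g M = 0 := by
  have h := h3 1 (M - 1)
  rw [add_sub_cancel, hfpos 1 one_pos, hfpos (M - 1) (by omega), hfpos (M + ν) hMν] at h
  have hM2 : (M : ℂ) - 2 ≠ 0 := sub_ne_zero.mpr (by exact_mod_cast (by omega : M ≠ 2))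
  refine (mul_eq_zero.mp ?_).resolve_left hM2
  push_cast at h
  linear_combination h

/-- Here `m = -1`, `n = M + 1`: every value of `f` involved is `0`. -/
theorem EqE3.apply_eq_zero_of_neg {ν : ℤ} {f g : ℤ → ℂ} (hfneg : ∀ m : ℤ, m < 0 → f m = 0)
    (h3 : EqE3 ν f g) {M : ℤ} (hM : M ≤ -3) (hMν : M + ν < 0) : g M = 0 := by
  have h := h3 (-1) (M + 1)
  rw [show (-1 : ℤ) + (M + 1) = M by ring, hfneg (-1) neg_one_lt_zero, hfneg (M + 1) (by omega),
    hfneg (M + ν) hMν] at h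
  have hM2 : (M : ℂ) + 2 ≠ 0 := by
    rw [← sub_neg_eq_add, sub_ne_zero]; exact_mod_cast (by omega : M ≠ -2)
  refine (mul_eq_zero.mp ?_).resolve_left hM2
  push_cast at h
  linear_combination -h

theorem stmt10_general (ν : ℤ) (f g : ℤ → ℂ)
    (hfpos : ∀ m : ℤ, 0 < m → f m = -1)
    (hfneg : ∀ m : ℤ, m < 0 → f m = 0)
    (h3 : EqE3 ν f g) :
    (0 < ν →
      (∀ m : ℤ, 3 ≤ m → g m = 0) ∧ (∀ m : ℤ, m ≤ min (-3) (-1 - ν) → g m = 0)) ∧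
    (ν < 0 →
      (∀ m : ℤ, max 3 (1 - ν) ≤ m → g m = 0) ∧ (∀ m : ℤ, m ≤ -3 → g m = 0)) := by
  refine ⟨fun hν => ⟨fun m hm => ?_, fun m hm => ?_⟩, fun hν => ⟨fun m hm => ?_, fun m hm => ?_⟩⟩
  · exact h3.apply_eq_zero_of_pos hfpos hm (by omega)
  · exact h3.apply_eq_zero_of_neg hfneg (by omega) (by omega)
  · exact h3.apply_eq_zero_of_pos hfpos (by omega) (by omega)
  · exact h3.apply_eq_zero_of_neg hfneg hm (by omega)

theorem stmt10 (ν : ℤ) (hν : ν ≠ 0) (a : ℂ) (f g : ℤ → ℂ)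
    (hfpos : ∀ m : ℤ, 0 < m → f m = -1) (hf0 : f 0 = a)
    (hfneg : ∀ m : ℤ, m < 0 → f m = 0)
    (h2 : EqE2 ν g) (h3 : EqE3 ν f g) :
    (0 < ν →
      (∀ m : ℤ, 3 ≤ m → g m = 0) ∧ (∀ m : ℤ, m ≤ min (-3) (-1 - ν) → g m = 0)) ∧
    (ν < 0 →
      (∀ m : ℤ, max 3 (1 - ν) ≤ m → g m = 0) ∧ (∀ m : ℤ, m ≤ -3 → g m = 0)) :=
  stmt10_general ν f g hfpos hfneg h3
end
end

section
/- Let ν be an integer with ν ≥ 3 or ν ≤ −3, let a ∈ ℂ, and let f : ℤ → ℂ be given by f(m) = −1 for m > 0, f(0) = a, and f(m) = 0 for m < 0. If g : ℤ → ℂ is such that (f, g, ν) satisfy equations (E2) and (E3), then g(m) = 0 for all m ∈ ℤ. -/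
noncomputable section

/-!
Replacing `ν, f, g` by `-ν, -1 - f(-·), g(-·)` preserves (E2) and (E3), so it suffices to treat
`ν ≥ 3` with `f` vanishing on the negative integers. There (E3) at `(k + 1, -1)` kills `g` below
`-ν`. Then (E2) gives `g(-1) g(-ν) = g(1 - ν) g(-ν) = 0`, while (E3) at `(-1, 1 - ν)` expresses
`(ν - 2) g(-ν)` through `g(-1)` and `g(1 - ν)`, so `g(-ν) = 0`. Finally (E2) at `(m, -ν)` reads
`(m + 2ν) g(m)² = ν g(m) g(-ν)`, which kills `g(m)` for `m ≠ -2ν`, and `-2ν < -ν`.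
-/

namespace EqE2

variable {ν : ℤ} {g : ℤ → ℂ}

theorem reflect (h2 : EqE2 ν g) : EqE2 (-ν) (fun m => g (-m)) := by
  intro m n
  have h := h2 (-m) (-n)
  beta_reduce
  rw [show -(m + n + -ν) = -m + -n + ν by ring]
  push_cast at h ⊢
  linear_combination -h

theorem apply_mul_apply_eq_zero (h2 : EqE2 ν g) {m n : ℤ} (hn : g n = 0)
    (hmn : m - n + ν ≠ 0) : g m * g (m + n + ν) = 0 := by
  have hc : (m - n + ν : ℂ) ≠ 0 := by norm_cast
  refine (mul_eq_zero.mp ?_).resolve_left hc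
  have h := h2 m n
  rw [hn] at h
  linear_combination -h

theorem apply_eq_zero_of_apply_neg_eq_zero (h2 : EqE2 ν g) (hg : g (-ν) = 0) {m : ℤ}
    (hm : m ≠ -2 * ν) : g m = 0 := by
  have hc : (m + 2 * ν : ℂ) ≠ 0 := by norm_cast; omega
  refine pow_eq_zero_iff two_ne_zero |>.mp <| (mul_eq_zero.mp ?_).resolve_left hc
  have h := h2 m (-ν)
  rw [show m + -ν + ν = m by ring, hg] at h
  push_cast at h
  linear_combination -h

end EqE2

namespace EqE3

variable {ν : ℤ} {f g : ℤ → ℂ}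

theorem reflect (h3 : EqE3 ν f g) :
    EqE3 (-ν) (fun m => -1 - f (-m)) (fun m => g (-m)) := by
  intro m n
  have h := h3 (-m) (-n)
  beta_reduce
  rw [show -(m + n + -ν) = -m + -n + ν by ring, show -(m + n) = -m + -n by ring]
  push_cast at h ⊢
  linear_combination h

theorem apply_eq_zero_of_lt_neg (hν : 2 ≤ ν) (hf : ∀ m < 0, f m = 0) (h3 : EqE3 ν f g)
    {k : ℤ} (hk : k < -ν) : g k = 0 := by
  have hc : (k + 2 : ℂ) ≠ 0 := by norm_cast; omega
  refine (mul_eq_zero.mp ?_).resolve_left hc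
  have h := h3 (k + 1) (-1)
  rw [show k + 1 + -1 + ν = k + ν by ring, show k + 1 + -1 = k by ring,
    hf (k + 1) (by omega), hf (-1) (by omega), hf (k + ν) (by omega)] at h
  push_cast at h
  linear_combination h

theorem apply_neg_eq_zero (hν : 3 ≤ ν) (hf : ∀ m < 0, f m = 0) (h2 : EqE2 ν g)
    (h3 : EqE3 ν f g) : g (-ν) = 0 := by
  have hlow : ∀ k < -ν, g k = 0 := fun k hk => h3.apply_eq_zero_of_lt_neg (by omega) hf hk
  have hprod₁ : g (-1) * g (-ν) = 0 := by
    have h := h2.apply_mul_apply_eq_zero (m := -1) (hlow (1 - 2 * ν) (by omega)) (by omega)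
    rwa [show -1 + (1 - 2 * ν) + ν = -ν by ring] at h
  have hprod₂ : g (1 - ν) * g (-ν) = 0 := by
    have h := h2.apply_mul_apply_eq_zero (m := 1 - ν) (hlow (-ν - 1) (by omega)) (by omega)
    rwa [show 1 - ν + (-ν - 1) + ν = -ν by ring] at h
  have hc : (ν - 2 : ℂ) ≠ 0 := by norm_cast; omega
  refine pow_eq_zero_iff two_ne_zero |>.mp <| (mul_eq_zero.mp ?_).resolve_left hc
  have h := h3 (-1) (1 - ν)
  rw [show -1 + (1 - ν) + ν = 0 by ring, show -1 + (1 - ν) = -ν by ring,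
    hf (-1) (by omega), hf (1 - ν) (by omega)] at h
  push_cast at h
  linear_combination g (-ν) * h + 2 * f 0 * hprod₂ + (2 - 2 * ν) * f 0 * hprod₁

theorem apply_eq_zero_of_three_le (hν : 3 ≤ ν) (hf : ∀ m < 0, f m = 0) (h2 : EqE2 ν g)
    (h3 : EqE3 ν f g) (m : ℤ) : g m = 0 := by
  by_cases hm : m = -2 * ν
  · exact h3.apply_eq_zero_of_lt_neg (by omega) hf (by omega)
  · exact h2.apply_eq_zero_of_apply_neg_eq_zero (h3.apply_neg_eq_zero hν hf h2) hm

end EqE3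

theorem stmt11_general (ν : ℤ) (hν : 3 ≤ ν ∨ ν ≤ -3) (f g : ℤ → ℂ)
    (hfpos : ∀ m : ℤ, 0 < m → f m = -1)
    (hfneg : ∀ m : ℤ, m < 0 → f m = 0)
    (h2 : EqE2 ν g) (h3 : EqE3 ν f g) :
    ∀ m : ℤ, g m = 0 := by
  rcases hν with hν | hν
  · exact h3.apply_eq_zero_of_three_le hν hfneg h2
  · intro m
    have hf : ∀ m < 0, -1 - f (-m) = 0 := fun m hm => by rw [hfpos (-m) (by omega)]; ring
    simpa using h3.reflect.apply_eq_zero_of_three_le (by omega) hf h2.reflect (-m)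

theorem stmt11 (ν : ℤ) (hν : 3 ≤ ν ∨ ν ≤ -3) (a : ℂ) (f g : ℤ → ℂ)
    (hfpos : ∀ m : ℤ, 0 < m → f m = -1) (hf0 : f 0 = a)
    (hfneg : ∀ m : ℤ, m < 0 → f m = 0)
    (h2 : EqE2 ν g) (h3 : EqE3 ν f g) :
    ∀ m : ℤ, g m = 0 :=
  stmt11_general ν hν f g hfpos hfneg h2 h3
end
end

section
/- Let ν be a nonzero integer, a ∈ ℂ, and let f : ℤ → ℂ be given by f(m) = −1 for m > 0, f(0) = a, and f(m) = 0 for m < 0. Let g : ℤ → ℂ be not identically zero and suppose (f, g, ν) satisfy equations (E2) and (E3). Then exactly one of the following holds: (i) ν ∈ {1, 2}, a = −1, g(−ν) ≠ 0, and g(m) = 0 for all m ≠ −ν; (ii) ν ∈ {−1, −2}, a = 0, g(−ν) ≠ 0, and g(m) = 0 for all m ≠ −ν. -/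
noncomputable section

/-! The substitution `m ↦ -m`, `ν ↦ -ν`, `f ↦ -1 - f (-·)`, `g ↦ g (-·)` preserves (E2), (E3)
and the shape of `f` (with `a ↦ -1 - a`), so it suffices to treat `ν > 0`. Then (E3) at suitable
pairs makes `g` vanish below `-ν` and above `0`. By (E2), `g m ≠ 0 = g n` and `m - n + ν ≠ 0`
force `g (m + n + ν) = 0`: this propagation shows first that `g (-ν) ≠ 0` and then that `g`
vanishes everywhere else. Finally (E3) at `(-ν, 0)` gives `a = -1` and at `(-1, 1 - ν)` gives
`ν ≤ 2`. -/

def stepFun (a : ℂ) (m : ℤ) : ℂ := if 0 < m then -1 else if m = 0 then a else 0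

theorem stepFun_of_pos {a : ℂ} {m : ℤ} (hm : 0 < m) : stepFun a m = -1 := if_pos hm

theorem stepFun_zero (a : ℂ) : stepFun a 0 = a := rfl

theorem stepFun_of_neg {a : ℂ} {m : ℤ} (hm : m < 0) : stepFun a m = 0 := by
  simp [stepFun, hm.not_gt, hm.ne]

theorem neg_one_sub_stepFun_neg (a : ℂ) :
    (fun m => -1 - stepFun a (-m)) = stepFun (-1 - a) := by
  funext m
  rcases lt_trichotomy m 0 with hm | rfl | hm
  · rw [stepFun_of_pos (neg_pos.2 hm), stepFun_of_neg hm]; ring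
  · simp [stepFun_zero]
  · rw [stepFun_of_neg (neg_neg_of_pos hm), stepFun_of_pos hm]; ring

section

variable {ν : ℤ} {a : ℂ} {f g : ℤ → ℂ}

theorem EqE2.comp_neg (h2 : EqE2 ν g) : EqE2 (-ν) (fun m => g (-m)) := by
  intro m n
  have e := h2 (-n) (-m)
  beta_reduce
  rw [show -(m + n + -ν) = -n + -m + ν by ring]
  push_cast at e ⊢
  linear_combination e

theorem EqE3.comp_neg (h3 : EqE3 ν f g) :
    EqE3 (-ν) (fun m => -1 - f (-m)) (fun m => g (-m)) := by
  intro m n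
  have e := h3 (-m) (-n)
  beta_reduce
  rw [show -(m + n + -ν) = -m + -n + ν by ring, show -(m + n) = -m + -n by ring]
  push_cast at e ⊢
  linear_combination e

theorem EqE2.apply_add_add_eq_zero (h2 : EqE2 ν g) {m n : ℤ} (hm : g m ≠ 0) (hn : g n = 0)
    (hmn : m - n + ν ≠ 0) : g (m + n + ν) = 0 := by
  have hmn' : (m - n + ν : ℂ) ≠ 0 := by exact_mod_cast hmn
  have e := h2 m n
  rw [hn] at e
  have e' : ((m - n + ν : ℂ) * g m) * g (m + n + ν) = 0 := by linear_combination -e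
  exact eq_zero_of_ne_zero_of_mul_left_eq_zero (mul_ne_zero hmn' hm) e'

theorem EqE3.apply_eq_zero_of_pos_s12 (h3 : EqE3 ν (stepFun a) g) {m : ℤ} (hm : 0 < m)
    (hmν : 2 ≤ m + ν) : g m = 0 := by
  have e := h3 m (-1)
  rw [stepFun_of_pos hm, stepFun_of_neg (by norm_num : (-1 : ℤ) < 0),
    stepFun_of_pos (by omega : 0 < m + -1 + ν)] at e
  have hc : (1 + m + ν : ℂ) ≠ 0 := by exact_mod_cast (show 1 + m + ν ≠ 0 by omega)
  push_cast at e
  exact eq_zero_of_ne_zero_of_mul_left_eq_zero hc (by linear_combination -e)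

theorem EqE3.apply_eq_zero_of_add_two_le_neg (h3 : EqE3 ν (stepFun a) g) (hν : 0 ≤ ν) {m : ℤ}
    (hm : m + 2 ≤ -ν) : g m = 0 := by
  have e := h3 1 m
  rw [stepFun_of_pos one_pos, stepFun_of_neg (by omega : m < 0),
    stepFun_of_neg (by omega : 1 + m + ν < 0)] at e
  have hc : (m - 1 + ν : ℂ) ≠ 0 := by exact_mod_cast (show m - 1 + ν ≠ 0 by omega)
  push_cast at e
  exact eq_zero_of_ne_zero_of_mul_left_eq_zero hc (by linear_combination -e)

/-- (E3) at `(-ν - 1, 1)` and `(-ν - 1, 0)` read `(a + 1) g(-ν - 1) = 0` and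
`(ν + 1)(a + 1) g(-ν - 1) = a g(-ν - 1)`. -/
theorem EqE3.apply_neg_sub_one_eq_zero (h3 : EqE3 ν (stepFun a) g) (hν : 0 < ν) :
    g (-ν - 1) = 0 := by
  have e₁ := h3 (-ν - 1) 1
  have e₀ := h3 (-ν - 1) 0
  rw [show -ν - 1 + 1 + ν = 0 by ring, stepFun_zero, stepFun_of_pos one_pos,
    stepFun_of_neg (by omega : -ν - 1 < 0), h3.apply_eq_zero_of_pos_s12 one_pos (by omega)] at e₁
  rw [show -ν - 1 + 0 + ν = -1 by ring, add_zero, stepFun_zero,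
    stepFun_of_neg (by omega : -ν - 1 < 0), stepFun_of_neg (by norm_num : (-1 : ℤ) < 0)] at e₀
  push_cast at e₁ e₀
  linear_combination (ν / 2 : ℂ) * e₁ - e₀

theorem classification_of_pos (hν : 0 < ν) (hg : ∃ m, g m ≠ 0) (h2 : EqE2 ν g)
    (h3 : EqE3 ν (stepFun a) g) :
    (ν = 1 ∨ ν = 2) ∧ a = -1 ∧ g (-ν) ≠ 0 ∧ ∀ m : ℤ, m ≠ -ν → g m = 0 := by
  have below : ∀ m, m + 1 ≤ -ν → g m = 0 := by
    intro m hm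
    rcases hm.eq_or_lt with hm | hm
    · rw [show m = -ν - 1 by omega]
      exact h3.apply_neg_sub_one_eq_zero hν
    · exact h3.apply_eq_zero_of_add_two_le_neg hν.le (by omega)
  have hgν : g (-ν) ≠ 0 := by
    intro hgν
    obtain ⟨k, hk⟩ := hg
    have hkν : -ν ≤ k := by
      by_contra! hkν
      exact hk (below k (by omega))
    exact hk (by simpa using h2.apply_add_add_eq_zero hk hgν (by omega))
  have above : ∀ m, 2 - ν ≤ m → g m = 0 := by
    intro m hm
    by_contra hgm
    have := h2.apply_add_add_eq_zero hgm (below (-2 * ν - m) (by omega)) (by omega)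
    exact hgν (by rwa [show m + (-2 * ν - m) + ν = -ν by ring] at this)
  have hg₁ : g (1 - ν) = 0 := by
    by_contra hg₁
    have := h2.apply_add_add_eq_zero hg₁ (below (-ν - 1) (by omega)) (by omega)
    exact hgν (by rwa [show 1 - ν + (-ν - 1) + ν = -ν by ring] at this)
  have supp : ∀ m : ℤ, m ≠ -ν → g m = 0 := by
    intro m hm
    rcases (by omega : m + 1 ≤ -ν ∨ m = 1 - ν ∨ 2 - ν ≤ m) with hm | rfl | hm
    · exact below m hm
    · exact hg₁
    · exact above m hm
  have ha : a = -1 := by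
    have e := h3 (-ν) 0
    rw [show -ν + 0 + ν = 0 by ring, add_zero, stepFun_zero, stepFun_of_neg (by omega),
      supp 0 (by omega)] at e
    push_cast at e
    have hν' : (ν : ℂ) ≠ 0 := by exact_mod_cast hν.ne'
    have := eq_zero_of_ne_zero_of_mul_left_eq_zero (mul_ne_zero hν' hgν)
      (by linear_combination -e : (ν : ℂ) * g (-ν) * (a + 1) = 0)
    linear_combination this
  refine ⟨?_, ha, hgν, supp⟩
  by_contra! hν₁₂
  have e := h3 (-1) (1 - ν)
  rw [show -1 + (1 - ν) + ν = 0 by ring, show -1 + (1 - ν) = -ν by ring, stepFun_zero,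
    stepFun_of_neg (by norm_num : (-1 : ℤ) < 0), stepFun_of_neg (by omega : 1 - ν < 0),
    hg₁, supp (-1) (by omega)] at e
  push_cast at e
  have hc : (ν - 2 : ℂ) ≠ 0 := by exact_mod_cast (show ν - 2 ≠ 0 by omega)
  exact hgν (eq_zero_of_ne_zero_of_mul_left_eq_zero hc (by linear_combination e))

end

theorem stmt12 (ν : ℤ) (hν : ν ≠ 0) (a : ℂ) (f g : ℤ → ℂ)
    (hfpos : ∀ m : ℤ, 0 < m → f m = -1) (hf0 : f 0 = a)
    (hfneg : ∀ m : ℤ, m < 0 → f m = 0)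
    (hg : ∃ m : ℤ, g m ≠ 0)
    (h2 : EqE2 ν g) (h3 : EqE3 ν f g) :
    Xor'
      ((ν = 1 ∨ ν = 2) ∧ a = -1 ∧ g (-ν) ≠ 0 ∧ ∀ m : ℤ, m ≠ -ν → g m = 0)
      ((ν = -1 ∨ ν = -2) ∧ a = 0 ∧ g (-ν) ≠ 0 ∧ ∀ m : ℤ, m ≠ -ν → g m = 0) := by
  have hf : f = stepFun a := by
    funext m
    rcases lt_trichotomy m 0 with hm | rfl | hm
    · rw [hfneg m hm, stepFun_of_neg hm]
    · rw [hf0, stepFun_zero]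
    · rw [hfpos m hm, stepFun_of_pos hm]
  subst hf
  rcases hν.lt_or_gt with hν | hν
  · have h3' := h3.comp_neg
    rw [neg_one_sub_stepFun_neg] at h3'
    have hg' : ∃ m, g (-m) ≠ 0 := by
      obtain ⟨m, hm⟩ := hg
      exact ⟨-m, by rwa [neg_neg]⟩
    obtain ⟨hν', ha, hgν, hsupp⟩ := classification_of_pos (neg_pos.2 hν) hg' h2.comp_neg h3'
    refine Or.inr ⟨⟨by omega, by linear_combination -ha, by simpa using hgν, fun m hm => ?_⟩,
      fun hA => by rcases hA.1 with h | h <;> omega⟩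
    simpa using hsupp (-m) (by omega)
  · exact Or.inl ⟨classification_of_pos hν hg h2 h3, fun hB => by rcases hB.1 with h | h <;> omega⟩
end
end

section
/- Let ν be an integer with ν ≥ 1 or ν ≤ −5, and let f : ℤ → ℂ be given by f(m) = −1 for m ≥ 2 and f(m) = 0 for m ≤ 1. If g : ℤ → ℂ is such that (f, g, ν) satisfy equations (E2) and (E3), then g(m) = 0 for all m ∈ ℤ. -/
noncomputable section

/-!
Equation (E2) alone already forces `g` to vanish as soon as `g (-ν) = 0` and `g (-2ν) = 0`:
specialising it at `n = -ν` gives `(m + 2ν) g(m)² = ν g(m) g(-ν)`. For the step function `f`,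
equation (E3) kills `g` on both tails, `k ≤ min 1 (1 - ν)` and `k ≥ max 2 (2 - ν)`. For `ν ≥ 1`
this contains `-ν` and `-2ν`. For `ν ≤ -5` it contains `-2ν` but not `-ν`; there (E2), specialised
at `n = -2ν - m`, first gives `g 2 = g (-ν - 2) = 0`, and then (E3) at `(2, -ν - 2)` gives `g (-ν) = 0`.
-/

namespace EqE2

variable {ν : ℤ} {g : ℤ → ℂ}

theorem apply_eq_zero_of_mul_apply_neg_eq_zero (h2 : EqE2 ν g) {m : ℤ}
    (hm : g m * g (-ν) = 0) (hm2 : m + 2 * ν ≠ 0) : g m = 0 := by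
  have e := h2 m (-ν)
  rw [show m + -ν + ν = m by ring] at e
  have key : ((m + 2 * ν : ℤ) : ℂ) * (g m * g m) = 0 := by
    push_cast at e ⊢
    linear_combination -e + (ν : ℂ) * hm
  exact mul_self_eq_zero.mp ((mul_eq_zero.mp key).resolve_left (Int.cast_ne_zero.mpr hm2))

theorem mul_apply_neg_eq_zero (h2 : EqE2 ν g) {m : ℤ} (hn : g (-2 * ν - m) = 0)
    (hm3 : 2 * m + 3 * ν ≠ 0) : g m * g (-ν) = 0 := by
  have e := h2 m (-2 * ν - m)
  rw [show m + (-2 * ν - m) + ν = -ν by ring, hn] at e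
  have key : ((2 * m + 3 * ν : ℤ) : ℂ) * (g m * g (-ν)) = 0 := by
    push_cast at e ⊢
    linear_combination -e
  exact (mul_eq_zero.mp key).resolve_left (Int.cast_ne_zero.mpr hm3)

theorem apply_eq_zero_of_apply_neg_two_mul_sub (h2 : EqE2 ν g) {m : ℤ}
    (hn : g (-2 * ν - m) = 0) (hm3 : 2 * m + 3 * ν ≠ 0) (hm2 : m + 2 * ν ≠ 0) : g m = 0 :=
  h2.apply_eq_zero_of_mul_apply_neg_eq_zero (h2.mul_apply_neg_eq_zero hn hm3) hm2

theorem eq_zero_of_apply_neg (h2 : EqE2 ν g) (h1 : g (-ν) = 0) (h2ν : g (-2 * ν) = 0)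
    (m : ℤ) : g m = 0 := by
  by_cases hm : m + 2 * ν = 0
  · rwa [show m = -2 * ν by omega]
  · exact h2.apply_eq_zero_of_mul_apply_neg_eq_zero (by rw [h1, mul_zero]) hm

end EqE2

namespace EqE3

variable {ν : ℤ} {f g : ℤ → ℂ}

theorem apply_eq_zero_of_le_one (h3 : EqE3 ν f g) (hfle : ∀ m : ℤ, m ≤ 1 → f m = 0)
    {k : ℤ} (hk : k ≤ 1) (hkν : k + ν ≤ 1) : g k = 0 := by
  have e := h3 1 (k - 1)
  rw [show 1 + (k - 1) + ν = k + ν by ring, show 1 + (k - 1) = k by ring,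
    hfle 1 le_rfl, hfle (k - 1) (by omega), hfle (k + ν) hkν] at e
  have key : ((2 - k : ℤ) : ℂ) * g k = 0 := by
    push_cast at e ⊢
    linear_combination e
  exact (mul_eq_zero.mp key).resolve_left (Int.cast_ne_zero.mpr (by omega))

theorem apply_eq_zero_of_two_le (h3 : EqE3 ν f g) (hfge : ∀ m : ℤ, 2 ≤ m → f m = -1)
    (hfle : ∀ m : ℤ, m ≤ 1 → f m = 0) {k : ℤ} (hk : 2 ≤ k) (hkν : 2 ≤ k + ν) : g k = 0 := by
  have e := h3 0 k
  rw [show 0 + k + ν = k + ν by ring, zero_add,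
    hfle 0 (by norm_num), hfge k hk, hfge (k + ν) hkν] at e
  have key : ((k + ν : ℤ) : ℂ) * g k = 0 := by
    push_cast at e ⊢
    linear_combination e
  exact (mul_eq_zero.mp key).resolve_left (Int.cast_ne_zero.mpr (by omega))

theorem apply_add_eq_zero (h3 : EqE3 ν f g) (hfge : ∀ m : ℤ, 2 ≤ m → f m = -1)
    (hfle : ∀ m : ℤ, m ≤ 1 → f m = 0) {m n : ℤ} (hm : 2 ≤ m) (hn : 2 ≤ n)
    (hmnν : m + n + ν ≤ 1) (hmn : m ≠ n) (hgm : g m = 0) (hgn : g n = 0) :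
    g (m + n) = 0 := by
  have e := h3 m n
  rw [hfge m hm, hfge n hn, hfle (m + n + ν) hmnν, hgm, hgn] at e
  have key : ((n - m : ℤ) : ℂ) * g (m + n) = 0 := by
    push_cast at e ⊢
    linear_combination e
  exact (mul_eq_zero.mp key).resolve_left (Int.cast_ne_zero.mpr (by omega))

end EqE3

theorem stmt13 (ν : ℤ) (hν : 1 ≤ ν ∨ ν ≤ -5) (f g : ℤ → ℂ)
    (hfge : ∀ m : ℤ, 2 ≤ m → f m = -1) (hfle : ∀ m : ℤ, m ≤ 1 → f m = 0)
    (h2 : EqE2 ν g) (h3 : EqE3 ν f g) :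
    ∀ m : ℤ, g m = 0 := by
  rcases hν with hν | hν
  · exact h2.eq_zero_of_apply_neg (h3.apply_eq_zero_of_le_one hfle (by omega) (by omega))
      (h3.apply_eq_zero_of_le_one hfle (by omega) (by omega))
  · have hg2 : g 2 = 0 := h2.apply_eq_zero_of_apply_neg_two_mul_sub
      (h3.apply_eq_zero_of_two_le hfge hfle (by omega) (by omega)) (by omega) (by omega)
    have hgν2 : g (-ν - 2) = 0 := h2.apply_eq_zero_of_apply_neg_two_mul_sub
      (h3.apply_eq_zero_of_two_le hfge hfle (by omega) (by omega)) (by omega) (by omega)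
    have hgν : g (-ν) = 0 := by
      simpa using h3.apply_add_eq_zero hfge hfle (m := 2) (n := -ν - 2) le_rfl (by omega)
        (by omega) (by omega) hg2 hgν2
    exact h2.eq_zero_of_apply_neg hgν (h3.apply_eq_zero_of_two_le hfge hfle (by omega) (by omega))
end
end

section
/- Let ν be a nonzero integer and let f : ℤ → ℂ be given by f(m) = −1 for m ≥ 2 and f(m) = 0 for m ≤ 1. Let g : ℤ → ℂ be not identically zero and suppose (f, g, ν) satisfy equations (E2) and (E3). Then one of the following holds: (i) ν ∈ {−2, −3, −4}, g(−ν) ≠ 0, and g(m) = 0 for all m ≠ −ν; (ii) ν = −1, g(2) ≠ 0, and g(m) = 0 for all m ≠ 2; (iii) ν = −2, g(2) ≠ 0, g(3) = 2·g(2), and g(m) = 0 for all m ∉ {2, 3}. -/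
noncomputable section

/-!
For the step function `f`, equation (E3) at suitable points forces `g m = 0` for
`m ≥ max 2 (2 - ν)` and for `m ≤ min 1 (-1 - ν)`, and `g (-ν) = 0` when `ν > -2`.
Equation (E2) at a zero `n` of `g` says that the support of `g` is stable under the
reflections `t ↦ t - m - ν` (`m`, `t` in the support) unless `t = 2 (m + ν)`.
For `ν ≥ 0` this empties the support. For `ν < 0` it confines the support to two
consecutive integers `a, a + 1`, and applying the reflections to these pins down `a` and `ν`;
only a singleton support `{-ν}` with `ν ≤ -5` survives, and it is excluded by (E3) at
`(2, -ν - 2)`, where `f` takes the values `-1, -1, 0`.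
-/

variable {ν : ℤ} {f g : ℤ → ℂ}

theorem EqE2.apply_sub_sub_ne_zero (h2 : EqE2 ν g) {m t : ℤ} (hm : g m ≠ 0) (ht : g t ≠ 0)
    (hmt : t ≠ 2 * (m + ν)) : g (t - m - ν) ≠ 0 := by
  intro hn
  have e := h2 m (t - m - ν)
  rw [hn, show m + (t - m - ν) + ν = t by ring] at e
  have key : ((2 * (m + ν) - t : ℤ) : ℂ) * (g m * g t) = 0 := by
    push_cast at e ⊢
    linear_combination -e
  rcases mul_eq_zero.mp key with h | h
  · exact hmt (by have := Int.cast_eq_zero.mp h; omega)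
  · exact mul_ne_zero hm ht h

theorem EqE3.apply_eq_zero_of_two_sub_le (h3 : EqE3 ν f g)
    (hfge : ∀ m : ℤ, 2 ≤ m → f m = -1) (hfle : ∀ m : ℤ, m ≤ 1 → f m = 0)
    {m : ℤ} (hm : 2 ≤ m) (hmν : 2 - ν ≤ m) : g m = 0 := by
  have e := h3 m 1
  rw [hfge m hm, hfle 1 le_rfl, hfge (m + 1 + ν) (by omega)] at e
  have key : ((1 - m - ν : ℤ) : ℂ) * g m = 0 := by
    push_cast
    linear_combination e
  exact (mul_eq_zero.mp key).resolve_left (Int.cast_ne_zero.mpr (by omega))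

theorem EqE3.apply_eq_zero_of_le_neg_one_sub (h3 : EqE3 ν f g)
    (hfge : ∀ m : ℤ, 2 ≤ m → f m = -1) (hfle : ∀ m : ℤ, m ≤ 1 → f m = 0)
    {m : ℤ} (hm : m ≤ 1) (hmν : m ≤ -1 - ν) : g m = 0 := by
  have e := h3 2 m
  rw [hfge 2 le_rfl, hfle m hm, hfle (2 + m + ν) (by omega)] at e
  have key : ((m - 2 + ν : ℤ) : ℂ) * g m = 0 := by
    push_cast
    linear_combination -e
  exact (mul_eq_zero.mp key).resolve_left (Int.cast_ne_zero.mpr (by omega))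

theorem EqE3.apply_neg_eq_zero_s14 (h3 : EqE3 ν f g) (hfle : ∀ m : ℤ, m ≤ 1 → f m = 0)
    (hν : -2 < ν) : g (-ν) = 0 := by
  have e := h3 1 (-ν - 1)
  rw [show 1 + (-ν - 1) + ν = 0 by ring, show 1 + (-ν - 1) = -ν by ring,
    hfle 1 le_rfl, hfle (-ν - 1) (by omega), hfle 0 (by omega)] at e
  have key : ((ν + 2 : ℤ) : ℂ) * g (-ν) = 0 := by
    push_cast at e ⊢
    linear_combination e
  exact (mul_eq_zero.mp key).resolve_left (Int.cast_ne_zero.mpr (by omega))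

theorem EqE3.sub_mul_apply_add (h3 : EqE3 ν f g)
    (hfge : ∀ m : ℤ, 2 ≤ m → f m = -1) (hfle : ∀ m : ℤ, m ≤ 1 → f m = 0)
    {m n : ℤ} (hm : 2 ≤ m) (hn : 2 ≤ n) (hmn : m + n + ν ≤ 1) :
    ((m : ℂ) - n) * g (m + n) = ((m : ℂ) - n + ν) * g m + ((m : ℂ) - n - ν) * g n := by
  have e := h3 m n
  rw [hfge m hm, hfge n hn, hfle (m + n + ν) hmn] at e
  linear_combination -e

theorem not_exists_apply_ne_zero_of_nonneg (h2 : EqE2 ν g) (h3 : EqE3 ν f g)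
    (hfge : ∀ m : ℤ, 2 ≤ m → f m = -1) (hfle : ∀ m : ℤ, m ≤ 1 → f m = 0) (hν : 0 ≤ ν) :
    ¬ ∃ m, g m ≠ 0 := by
  rintro ⟨a, ha⟩
  have hneg := h3.apply_neg_eq_zero_s14 hfle (by omega)
  have ha' : a = -2 * ν := by
    by_contra hne
    exact h2.apply_sub_sub_ne_zero ha ha (by omega) (by rwa [show a - a - ν = -ν by ring])
  obtain rfl | hpos := hν.eq_or_lt
  · exact ha (by simpa [ha'] using hneg)
  · exact ha (h3.apply_eq_zero_of_le_neg_one_sub hfge hfle (by omega) (by omega))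

theorem apply_add_eq_zero_of_two_le (h2 : EqE2 ν g) (h3 : EqE3 ν f g)
    (hfge : ∀ m : ℤ, 2 ≤ m → f m = -1) (hfle : ∀ m : ℤ, m ≤ 1 → f m = 0) (hν : ν ≤ 0)
    {m j : ℤ} (hm : g m ≠ 0) (hj : 2 ≤ j) : g (m + j) = 0 := by
  by_contra ht
  have hm' : m < 2 - ν := by
    by_contra! h
    exact hm (h3.apply_eq_zero_of_two_sub_le hfge hfle (by omega) h)
  apply h2.apply_sub_sub_ne_zero hm ht (by omega)
  rw [show m + j - m - ν = j - ν by ring]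
  exact h3.apply_eq_zero_of_two_sub_le hfge hfle (by omega) (by omega)

theorem exists_support_subset_pair (h2 : EqE2 ν g) (h3 : EqE3 ν f g)
    (hfge : ∀ m : ℤ, 2 ≤ m → f m = -1) (hfle : ∀ m : ℤ, m ≤ 1 → f m = 0) (hν : ν ≤ 0)
    (hg : ∃ m, g m ≠ 0) : ∃ a, g a ≠ 0 ∧ ∀ m, g m ≠ 0 → m = a ∨ m = a + 1 := by
  have hbdd : ∀ m, g m ≠ 0 → ν ≤ m := fun m hm => by
    by_contra! h
    exact hm (h3.apply_eq_zero_of_le_neg_one_sub hfge hfle (by omega) (by omega))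
  obtain ⟨a, ha, hmin⟩ := Int.exists_least_of_bdd ⟨ν, hbdd⟩ hg
  refine ⟨a, ha, fun m hm => ?_⟩
  have hge := hmin m hm
  by_contra hne
  have hgap := apply_add_eq_zero_of_two_le h2 h3 hfge hfle hν ha (j := m - a) (by omega)
  rw [add_sub_cancel] at hgap
  exact hm hgap

theorem eq_of_support_eq_singleton (h2 : EqE2 ν g) (h3 : EqE3 ν f g)
    (hfge : ∀ m : ℤ, 2 ≤ m → f m = -1) (hfle : ∀ m : ℤ, m ≤ 1 → f m = 0) (hν : ν < 0)
    {a : ℤ} (ha : g a ≠ 0) (hz : ∀ m, m ≠ a → g m = 0) :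
    (ν = -1 ∧ a = 2) ∨ (a = -ν ∧ -4 ≤ ν ∧ ν ≤ -2) := by
  have hle : a ≤ 1 - ν := by
    by_contra! h
    exact ha (h3.apply_eq_zero_of_two_sub_le hfge hfle (by omega) (by omega))
  have hrefl : a = -ν ∨ a = -2 * ν := by
    by_contra! h
    exact h2.apply_sub_sub_ne_zero ha ha (by omega) (hz _ (by omega))
  obtain rfl | rfl := hrefl
  · have h1 : ν ≠ -1 := by
      rintro rfl
      exact ha (h3.apply_neg_eq_zero_s14 hfle (by omega))
    have h5 : -5 < ν := by
      by_contra! h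
      have e := h3.sub_mul_apply_add hfge hfle (m := 2) (n := -ν - 2) le_rfl (by omega)
        (by omega)
      rw [show 2 + (-ν - 2) = -ν by ring, hz 2 (by omega), hz (-ν - 2) (by omega)] at e
      have key : ((4 + ν : ℤ) : ℂ) * g (-ν) = 0 := by
        push_cast at e ⊢
        linear_combination e
      exact ha ((mul_eq_zero.mp key).resolve_left (Int.cast_ne_zero.mpr (by omega)))
    omega
  · omega

theorem eq_of_support_eq_pair (h2 : EqE2 ν g) (h3 : EqE3 ν f g)
    (hfge : ∀ m : ℤ, 2 ≤ m → f m = -1) (hfle : ∀ m : ℤ, m ≤ 1 → f m = 0) (hν : ν < 0)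
    {a : ℤ} (ha : g a ≠ 0) (ha1 : g (a + 1) ≠ 0) (hs : ∀ m, g m ≠ 0 → m = a ∨ m = a + 1) :
    ν = -2 ∧ a = 2 ∧ g 3 = 2 * g 2 := by
  have hle : a + 1 ≤ 1 - ν := by
    by_contra! h
    exact ha1 (h3.apply_eq_zero_of_two_sub_le hfge hfle (by omega) (by omega))
  have hmem₀ := hs _ (h2.apply_sub_sub_ne_zero ha ha (by omega))
  have hmem₁ := hs _ (h2.apply_sub_sub_ne_zero ha ha1 (by omega))
  have hrefl : a = 2 * (a + 1 + ν) := by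
    by_contra hne
    have := hs _ (h2.apply_sub_sub_ne_zero ha1 ha hne)
    omega
  obtain ⟨rfl, rfl⟩ : ν = -2 ∧ a = 2 := by omega
  refine ⟨rfl, rfl, ?_⟩
  have e := h2 3 2
  rw [show (3 : ℤ) + 2 + -2 = 3 by norm_num] at e
  push_cast at e
  have key : g 3 * (g 3 - 2 * g 2) = 0 := by linear_combination e
  exact sub_eq_zero.mp ((mul_eq_zero.mp key).resolve_left ha1)

theorem stmt14_general (ν : ℤ) (f g : ℤ → ℂ)
    (hfge : ∀ m : ℤ, 2 ≤ m → f m = -1) (hfle : ∀ m : ℤ, m ≤ 1 → f m = 0)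
    (hg : ∃ m : ℤ, g m ≠ 0)
    (h2 : EqE2 ν g) (h3 : EqE3 ν f g) :
    ((ν = -2 ∨ ν = -3 ∨ ν = -4) ∧ g (-ν) ≠ 0 ∧ ∀ m : ℤ, m ≠ -ν → g m = 0) ∨
    (ν = -1 ∧ g 2 ≠ 0 ∧ ∀ m : ℤ, m ≠ 2 → g m = 0) ∨
    (ν = -2 ∧ g 2 ≠ 0 ∧ g 3 = 2 * g 2 ∧ ∀ m : ℤ, m ≠ 2 → m ≠ 3 → g m = 0) := by
  obtain hν | hν := lt_or_ge ν 0
  swap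
  · exact absurd hg (not_exists_apply_ne_zero_of_nonneg h2 h3 hfge hfle hν)
  obtain ⟨a, ha, hs⟩ := exists_support_subset_pair h2 h3 hfge hfle hν.le hg
  by_cases ha1 : g (a + 1) = 0
  · have hz : ∀ m, m ≠ a → g m = 0 := fun m hm => by
      by_contra h
      rcases hs m h with rfl | rfl
      exacts [hm rfl, h ha1]
    rcases eq_of_support_eq_singleton h2 h3 hfge hfle hν ha hz with ⟨rfl, rfl⟩ | ⟨rfl, hν'⟩
    · exact Or.inr (Or.inl ⟨rfl, ha, hz⟩)
    · exact Or.inl ⟨by omega, ha, hz⟩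
  · obtain ⟨rfl, rfl, h32⟩ := eq_of_support_eq_pair h2 h3 hfge hfle hν ha ha1 hs
    refine Or.inr (Or.inr ⟨rfl, ha, h32, fun m hm2 hm3 => ?_⟩)
    by_contra h
    rcases hs m h with h' | h' <;> omega

theorem stmt14 (ν : ℤ) (hν : ν ≠ 0) (f g : ℤ → ℂ)
    (hfge : ∀ m : ℤ, 2 ≤ m → f m = -1) (hfle : ∀ m : ℤ, m ≤ 1 → f m = 0)
    (hg : ∃ m : ℤ, g m ≠ 0)
    (h2 : EqE2 ν g) (h3 : EqE3 ν f g) :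
    ((ν = -2 ∨ ν = -3 ∨ ν = -4) ∧ g (-ν) ≠ 0 ∧ ∀ m : ℤ, m ≠ -ν → g m = 0) ∨
    (ν = -1 ∧ g 2 ≠ 0 ∧ ∀ m : ℤ, m ≠ 2 → g m = 0) ∨
    (ν = -2 ∧ g 2 ≠ 0 ∧ g 3 = 2 * g 2 ∧ ∀ m : ℤ, m ≠ 2 → m ≠ 3 → g m = 0) :=
  stmt14_general ν f g hfge hfle hg h2 h3
end
end

section
/- Let ν be a nonzero integer and let f : ℤ → ℂ be given by f(m) = 0 for m ≥ 2 and f(m) = −1 for m ≤ 1. Let g : ℤ → ℂ be not identically zero and suppose (f, g, ν) satisfy equations (E2) and (E3). Then one of the following holds: (i) ν ∈ {−2, −3, −4}, g(−ν) ≠ 0, and g(m) = 0 for all m ≠ −ν; (ii) ν = −1, g(2) ≠ 0, and g(m) = 0 for all m ≠ 2; (iii) ν = −2, g(2) ≠ 0, g(3) = 2·g(2), and g(m) = 0 for all m ∉ {2, 3}. -/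
noncomputable section

/-!
On the step function `f`, (E3) at `(1, k - 1)` and at `(1, k)` forces `g k = 0` whenever `k` and
`k + ν` lie on the same side of the step between `1` and `2`. Equation (E2) with `g m = 0` reads
`(m - n - ν) g(n) g(m + n + ν) = 0`; at `m = -ν` it shows `g(-ν) ≠ 0`, which rules out
`ν ≥ 0`, and for `ν ≤ -3` it cuts the support `[2, 1 - ν]` down to `{-ν}`. For `ν = -2` the
support is `{2, 3}` and (E2) at `(3, 2)` gives `g 3 ∈ {0, 2 g 2}`. Finally (E3) at `(2, -ν - 2)`
gives `(ν + 4) g(-ν) = 0`.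
-/

lemma eq_zero_of_intCast_mul_eq_zero {a : ℤ} {x : ℂ} (ha : a ≠ 0) (h : (a : ℂ) * x = 0) :
    x = 0 :=
  (mul_eq_zero.mp h).resolve_left (Int.cast_ne_zero.mpr ha)

namespace EqE2

variable {ν : ℤ} {g : ℤ → ℂ}

lemma mul_eq_zero_of_apply_eq_zero (h2 : EqE2 ν g) {m n k : ℤ} (hk : m + n + ν = k)
    (hm : g m = 0) (hmn : m - n - ν ≠ 0) : g n * g k = 0 := by
  have h := h2 m n
  rw [hk, hm] at h
  exact eq_zero_of_intCast_mul_eq_zero hmn (by push_cast at h ⊢; linear_combination -h)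

lemma apply_neg_ne_zero (h2 : EqE2 ν g) {s : ℤ} (hs : g s ≠ 0) (hsν : s ≠ -2 * ν) :
    g (-ν) ≠ 0 := fun hν ↦
  hs (mul_self_eq_zero.mp (h2.mul_eq_zero_of_apply_eq_zero (by ring) hν (by omega)))

lemma apply_three_eq_zero_or_eq_two_mul (h2 : EqE2 (-2) g) : g 3 = 0 ∨ g 3 = 2 * g 2 := by
  have h := h2 3 2
  norm_num at h
  exact (mul_eq_zero.mp (by linear_combination h : g 3 * (g 3 - 2 * g 2) = 0)).imp id
    sub_eq_zero.mp

lemma apply_eq_zero_of_ne_neg (h2 : EqE2 ν g) (hν : ν ≤ -3) (hb : g (-ν) ≠ 0)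
    (hout : ∀ m, m < 2 ∨ 1 - ν < m → g m = 0) : ∀ m, m ≠ -ν → g m = 0 := by
  have hmid : ∀ k, 2 ≤ k → k ≤ -ν - 2 → g k = 0 := fun k _ hk ↦
    (mul_eq_zero.mp (h2.mul_eq_zero_of_apply_eq_zero (by ring)
      (hout (-2 * ν - k) (by omega)) (by omega))).resolve_right hb
  have hnear : g (-ν - 1) * g (-ν + 1) = 0 :=
    h2.mul_eq_zero_of_apply_eq_zero (by ring) (hout (-ν + 2) (by omega)) (by omega)
  have hbelow : g (-ν - 1) = 0 := by
    refine (mul_eq_zero.mp hnear).elim id fun habove ↦ ?_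
    exact (mul_eq_zero.mp (h2.mul_eq_zero_of_apply_eq_zero (m := -ν + 1) (by ring)
      habove (by omega))).resolve_right hb
  have habove : g (-ν + 1) = 0 :=
    (mul_eq_zero.mp (h2.mul_eq_zero_of_apply_eq_zero (m := -ν - 1) (by ring)
      hbelow (by omega))).resolve_right hb
  intro m hm
  rcases (by omega :
      m < 2 ∨ 1 - ν < m ∨ (2 ≤ m ∧ m ≤ -ν - 2) ∨ m = -ν - 1 ∨ m = -ν + 1) with
    h | h | ⟨h2m, h⟩ | rfl | rfl
  · exact hout m (Or.inl h)
  · exact hout m (Or.inr h)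
  · exact hmid m h2m h
  · exact hbelow
  · exact habove

end EqE2

section StepFunction

variable {ν : ℤ} {f g : ℤ → ℂ}

lemma apply_eq_zero_of_le_one (hfle : ∀ m : ℤ, m ≤ 1 → f m = -1) (h3 : EqE3 ν f g)
    {k : ℤ} (hk : k ≤ 1) (hkν : k + ν ≤ 1) : g k = 0 := by
  have h := h3 1 (k - 1)
  rw [show (1 : ℤ) + (k - 1) = k by ring, hfle 1 le_rfl, hfle (k - 1) (by omega),
    hfle (k + ν) hkν] at h
  exact eq_zero_of_intCast_mul_eq_zero (a := k - 2) (by omega)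
    (by push_cast at h ⊢; linear_combination h)

lemma apply_eq_zero_of_two_le (hfge : ∀ m : ℤ, 2 ≤ m → f m = 0)
    (hfle : ∀ m : ℤ, m ≤ 1 → f m = -1) (h3 : EqE3 ν f g) {k : ℤ} (hk : 2 ≤ k)
    (hkν : 2 ≤ k + ν) : g k = 0 := by
  have h := h3 1 k
  rw [show (1 : ℤ) + k + ν = k + ν + 1 by ring, hfle 1 le_rfl, hfge k hk,
    hfge (k + ν + 1) (by omega)] at h
  exact eq_zero_of_intCast_mul_eq_zero (a := k - 1 + ν) (by omega)
    (by push_cast at h ⊢; linear_combination -h)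

lemma le_one_iff_two_le_add_of_apply_ne_zero (hfge : ∀ m : ℤ, 2 ≤ m → f m = 0)
    (hfle : ∀ m : ℤ, m ≤ 1 → f m = -1) (h3 : EqE3 ν f g) {k : ℤ} (hk : g k ≠ 0) :
    k ≤ 1 ↔ 2 ≤ k + ν := by
  constructor
  · exact fun hk1 ↦ by_contra fun hkν ↦ hk (apply_eq_zero_of_le_one hfle h3 hk1 (by omega))
  · exact fun hkν ↦ by_contra fun hk1 ↦
      hk (apply_eq_zero_of_two_le hfge hfle h3 (by omega) hkν)

lemma apply_eq_zero_of_nonneg (hfge : ∀ m : ℤ, 2 ≤ m → f m = 0)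
    (hfle : ∀ m : ℤ, m ≤ 1 → f m = -1) (h2 : EqE2 ν g) (h3 : EqE3 ν f g) (hν : 0 ≤ ν)
    (s : ℤ) : g s = 0 := by
  by_contra hs
  have hs' := le_one_iff_two_le_add_of_apply_ne_zero hfge hfle h3 hs
  exact h2.apply_neg_ne_zero hs (by omega) (apply_eq_zero_of_le_one hfle h3 (by omega) (by omega))

lemma apply_eq_zero_of_lt_two_or_lt (hfge : ∀ m : ℤ, 2 ≤ m → f m = 0)
    (hfle : ∀ m : ℤ, m ≤ 1 → f m = -1) (h3 : EqE3 ν f g) (hν : ν < 0) {k : ℤ}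
    (hk : k < 2 ∨ 1 - ν < k) : g k = 0 := by
  by_contra hk0
  have := le_one_iff_two_le_add_of_apply_ne_zero hfge hfle h3 hk0
  omega

lemma apply_neg_eq_zero_of_lt_neg_four (hfge : ∀ m : ℤ, 2 ≤ m → f m = 0)
    (hfle : ∀ m : ℤ, m ≤ 1 → f m = -1) (h3 : EqE3 ν f g) (hν : ν < -4) (hg2 : g 2 = 0)
    (hgν : g (-ν - 2) = 0) : g (-ν) = 0 := by
  have h := h3 2 (-ν - 2)
  rw [show (2 : ℤ) + (-ν - 2) = -ν by ring, show -ν + ν = (0 : ℤ) by ring, hfge 2 le_rfl,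
    hfge (-ν - 2) (by omega), hfle 0 (by norm_num), hg2, hgν] at h
  exact eq_zero_of_intCast_mul_eq_zero (a := ν + 4) (by omega)
    (by push_cast at h ⊢; linear_combination h)

end StepFunction

theorem stmt15_general (ν : ℤ) (f g : ℤ → ℂ)
    (hfge : ∀ m : ℤ, 2 ≤ m → f m = 0) (hfle : ∀ m : ℤ, m ≤ 1 → f m = -1)
    (hg : ∃ m : ℤ, g m ≠ 0)
    (h2 : EqE2 ν g) (h3 : EqE3 ν f g) :
    ((ν = -2 ∨ ν = -3 ∨ ν = -4) ∧ g (-ν) ≠ 0 ∧ ∀ m : ℤ, m ≠ -ν → g m = 0) ∨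
    (ν = -1 ∧ g 2 ≠ 0 ∧ ∀ m : ℤ, m ≠ 2 → g m = 0) ∨
    (ν = -2 ∧ g 2 ≠ 0 ∧ g 3 = 2 * g 2 ∧ ∀ m : ℤ, m ≠ 2 → m ≠ 3 → g m = 0) := by
  obtain ⟨s, hs⟩ := hg
  have hν : ν < 0 := by
    by_contra! hν
    exact hs (apply_eq_zero_of_nonneg hfge hfle h2 h3 hν s)
  have hout : ∀ m, m < 2 ∨ 1 - ν < m → g m = 0 := fun m ↦
    apply_eq_zero_of_lt_two_or_lt hfge hfle h3 hν
  have hs_mem : 2 ≤ s ∧ s ≤ 1 - ν := by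
    by_contra h
    exact hs (hout s (by omega))
  rcases (by omega : ν = -1 ∨ ν ≤ -2) with rfl | hν2
  · obtain rfl : s = 2 := by omega
    exact Or.inr (Or.inl ⟨rfl, hs, fun m hm ↦ hout m (by omega)⟩)
  have hb : g (-ν) ≠ 0 := h2.apply_neg_ne_zero hs (by omega)
  rcases (by omega : ν = -2 ∨ ν ≤ -3) with rfl | hν3
  · have hrest : ∀ m : ℤ, m ≠ 2 → m ≠ 3 → g m = 0 := fun m _ _ ↦ hout m (by omega)
    rcases h2.apply_three_eq_zero_or_eq_two_mul with h3z | h3eq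
    · refine Or.inl ⟨Or.inl rfl, hb, fun m hm ↦ ?_⟩
      rcases eq_or_ne m 3 with rfl | hm3
      exacts [h3z, hrest m (by omega) hm3]
    · exact Or.inr (Or.inr ⟨rfl, by simpa using hb, h3eq, hrest⟩)
  have hsupp := h2.apply_eq_zero_of_ne_neg hν3 hb hout
  have hν4 : -4 ≤ ν := by
    by_contra h
    exact hb (apply_neg_eq_zero_of_lt_neg_four hfge hfle h3 (by omega) (hsupp 2 (by omega))
      (hsupp _ (by omega)))
  exact Or.inl ⟨by omega, hb, hsupp⟩

theorem stmt15 (ν : ℤ) (hν : ν ≠ 0) (f g : ℤ → ℂ)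
    (hfge : ∀ m : ℤ, 2 ≤ m → f m = 0) (hfle : ∀ m : ℤ, m ≤ 1 → f m = -1)
    (hg : ∃ m : ℤ, g m ≠ 0)
    (h2 : EqE2 ν g) (h3 : EqE3 ν f g) :
    ((ν = -2 ∨ ν = -3 ∨ ν = -4) ∧ g (-ν) ≠ 0 ∧ ∀ m : ℤ, m ≠ -ν → g m = 0) ∨
    (ν = -1 ∧ g 2 ≠ 0 ∧ ∀ m : ℤ, m ≠ 2 → g m = 0) ∨
    (ν = -2 ∧ g 2 ≠ 0 ∧ g 3 = 2 * g 2 ∧ ∀ m : ℤ, m ≠ 2 → m ≠ 3 → g m = 0) :=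
  stmt15_general ν f g hfge hfle hg h2 h3
end
end

section
/- Let b ∈ ℂ be nonzero, let ν = −2, let f : ℤ → ℂ be given by f(m) = −1 for m ≥ 2 and f(m) = 0 for m ≤ 1, and let g : ℤ → ℂ be given by g(2) = −b, g(3) = −2b, and g(m) = 0 for all m ∉ {2, 3}. Then f satisfies equation (E) and (f, g, ν) satisfy equations (E2) and (E3). -/
noncomputable section

/-!
(E) holds because `f = -𝟙_S` with `S = [2, ∞)` closed under addition, and `m + n ∈ S` forces
`m ∈ S` or `n ∈ S` unless `m = n = 1`, where the factor `m - n` vanishes. In (E2) and (E3),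
since `g` is supported on `{2, 3}`, every term vanishes except for finitely many shapes of
`(m, n)`. The delicate ones carry a factor `1 - k` against `f (k + 1) - f k` or, with
`k ≠ 2`, against `g (k + 1)`; off `k = 1` the latter factors vanish.
-/

theorem eqE_indicator_neg_one {S : Set ℤ} (hadd : ∀ m ∈ S, ∀ n ∈ S, m + n ∈ S)
    (hsplit : ∀ m n, m ≠ n → m + n ∈ S → m ∈ S ∨ n ∈ S) :
    EqE (S.indicator fun _ => -1) := by
  intro m n
  rcases eq_or_ne m n with rfl | hmn
  · simp
  refine mul_eq_zero_of_right _ ?_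
  by_cases hm : m ∈ S <;> by_cases hn : n ∈ S
  · simp [hm, hn, hadd m hm n hn]
  · simp [hm, hn]
  · simp [hm, hn]
  · have : m + n ∉ S := fun h => by simpa [hm, hn] using hsplit m n hmn h
    simp [hm, hn, this]

theorem eqE3_neg_two_of_support_subset {f g : ℤ → ℂ}
    (hfge : ∀ m : ℤ, 2 ≤ m → f m = -1) (hfle : ∀ m : ℤ, m ≤ 1 → f m = 0)
    (hg0 : ∀ m : ℤ, m ≠ 2 → m ≠ 3 → g m = 0) : EqE3 (-2) f g := by
  intro m n
  have hstep (k : ℤ) : (1 - k : ℂ) * (f (k + 1) - f k) = 0 := by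
    rcases lt_trichotomy k 1 with h | rfl | h
    · rw [hfle k (by omega), hfle (k + 1) (by omega)]; ring
    · simp
    · rw [hfge k (by omega), hfge (k + 1) (by omega)]; ring
  have hL : (m - n : ℂ) * (f m + f n + 1) * g (m + n) = 0 := by
    rcases eq_or_ne m n with rfl | hmn
    · simp
    by_cases h : m + n = 2 ∨ m + n = 3
    · suffices f m + f n + 1 = 0 by simp [this]
      rcases le_or_gt 2 m with hm | hm
      · rw [hfge m hm, hfle n (by omega)]; ring
      · rw [hfle m (by omega), hfge n (by omega)]; ring
    · rw [not_or] at h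
      simp [hg0 _ h.1 h.2]
  have hR1 : (n - m + (-2 : ℤ) : ℂ) * (f (m + n + -2) - f m) * g n = 0 := by
    by_cases hn : n = 2 ∨ n = 3
    · rcases hn with rfl | rfl
      · simp
      · rw [show m + 3 + -2 = m + 1 by ring]
        push_cast; linear_combination g 3 * hstep m
    · rw [not_or] at hn
      simp [hg0 n hn.1 hn.2]
  have hR2 : (n - m - (-2 : ℤ) : ℂ) * (f (m + n + -2) - f n) * g m = 0 := by
    by_cases hm : m = 2 ∨ m = 3
    · rcases hm with rfl | rfl
      · simp
      · rw [show 3 + n + -2 = n + 1 by ring]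
        push_cast; linear_combination -g 3 * hstep n
    · rw [not_or] at hm
      simp [hg0 m hm.1 hm.2]
  rw [hL, hR1, hR2, add_zero]

theorem eqE2_neg_two_of_values {b : ℂ} {g : ℤ → ℂ} (hg2 : g 2 = -b)
    (hg3 : g 3 = -2 * b) (hg0 : ∀ m : ℤ, m ≠ 2 → m ≠ 3 → g m = 0) : EqE2 (-2) g := by
  have hshift {k : ℤ} (hk : k ≠ 2) : (1 - k : ℂ) * g (k + 1) = 0 := by
    rcases eq_or_ne k 1 with rfl | hk1
    · simp
    · rw [hg0 (k + 1) (by omega) (by omega), mul_zero]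
  intro m n
  by_cases hm : m = 2 ∨ m = 3 <;> by_cases hn : n = 2 ∨ n = 3
  · rcases hm with rfl | rfl <;> rcases hn with rfl | rfl <;>
      norm_num only [hg2, hg3, hg0 4 (by norm_num) (by norm_num)] <;> ring
  · rw [not_or] at hn
    rw [hg0 n hn.1 hn.2]
    rcases hm with rfl | rfl
    · simp [hg0 n hn.1 hn.2]
    · rw [show 3 + n + -2 = n + 1 by ring]
      push_cast; linear_combination -g 3 * hshift hn.1
  · rw [not_or] at hm
    rw [hg0 m hm.1 hm.2]
    rcases hn with rfl | rfl
    · simp [hg0 m hm.1 hm.2]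
    · rw [show m + 3 + -2 = m + 1 by ring]
      push_cast; linear_combination g 3 * hshift hm.1
  · rw [not_or] at hm hn
    simp [hg0 m hm.1 hm.2, hg0 n hn.1 hn.2]

theorem stmt16_general (b : ℂ) (f g : ℤ → ℂ)
    (hfge : ∀ m : ℤ, 2 ≤ m → f m = -1) (hfle : ∀ m : ℤ, m ≤ 1 → f m = 0)
    (hg2 : g 2 = -b) (hg3 : g 3 = -2 * b)
    (hg0 : ∀ m : ℤ, m ≠ 2 → m ≠ 3 → g m = 0) :
    EqE f ∧ EqE2 (-2) g ∧ EqE3 (-2) f g := by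
  have hf : f = (Set.Ici 2).indicator fun _ => -1 := funext fun m => by
    rcases le_or_gt 2 m with hm | hm
    · simp [hm, hfge m hm]
    · simp [not_le.mpr hm, hfle m (by omega)]
  refine ⟨?_, eqE2_neg_two_of_values hg2 hg3 hg0,
    eqE3_neg_two_of_support_subset hfge hfle hg0⟩
  rw [hf]
  exact eqE_indicator_neg_one (fun m hm n hn => by simp_all; omega)
    (fun m n hmn h => by simp_all; omega)

theorem stmt16 (b : ℂ) (hb : b ≠ 0) (f g : ℤ → ℂ)
    (hfge : ∀ m : ℤ, 2 ≤ m → f m = -1) (hfle : ∀ m : ℤ, m ≤ 1 → f m = 0)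
    (hg2 : g 2 = -b) (hg3 : g 3 = -2 * b)
    (hg0 : ∀ m : ℤ, m ≠ 2 → m ≠ 3 → g m = 0) :
    EqE f ∧ EqE2 (-2) g ∧ EqE3 (-2) f g :=
  stmt16_general b f g hfge hfle hg2 hg3 hg0
end
end

section
/- Let f : ℤ → ℂ and let R : W → W be the ℂ-linear map on the Witt algebra W determined by R(L_m) = f(m)·L_m for all m ∈ ℤ. Then R is a Rota–Baxter operator of weight 1 on W if and only if f is one of the following eight functions: (P1) f ≡ 0; (P2) f ≡ −1; (P3ᵃ) f(m) = −1 for m > 0, f(0) = a, f(m) = 0 for m < 0, for some a ∈ ℂ; (P4ᵃ) f(m) = 0 for m > 0, f(0) = a, f(m) = −1 for m < 0, for some a ∈ ℂ; (P5) f(m) = −1 for m ≥ 2, f(m) = 0 for m ≤ 1; (P6) f(m) = 0 for m ≥ 2, f(m) = −1 for m ≤ 1; (P7) f(m) = −1 for m ≤ −2, f(m) = 0 for m ≥ −1; (P8) f(m) = 0 for m ≤ −2, f(m) = −1 for m ≥ −1. -/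
noncomputable section

/-- `R` is a Rota–Baxter operator of weight 1 with respect to the bracket `br`. -/
def IsRotaBaxterWeightOne (br : W →ₗ[ℂ] W →ₗ[ℂ] W) (R : W →ₗ[ℂ] W) : Prop :=
  ∀ x y : W, br (R x) (R y) = R (br (R x) y + br x (R y)) + R (br x y)


/-! On basis vectors the Rota–Baxter identity for `R (L m) = f m • L m` is the scalar equation
(E): `(m - n) (f (m + n) (1 + f m + f n) - f m f n) = 0`. Taking `n = 0` forces `f m ∈ {0, -1}`
for `m ≠ 0`, and then (E) says precisely that `f (m + n) = f m` whenever `m ≠ n` and `f m = f n`: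
every level set of `f` is closed under sums of distinct elements. Such a function, two-valued off
`0`, is either constant on the positive integers or constant on `m ≥ 2` with the other value at `1`,
and likewise on the negative side; comparing the two sides through sums such as `1 + (-2)` and
`2 + (-3)` leaves exactly the step functions `P1`–`P8`. -/

def LevelSetsSumClosed {α : Type*} (g : ℤ → α) : Prop :=
  ∀ m n, m ≠ n → g m = g n → g (m + n) = g m

def IsStepShape {α : Type*} (g : ℤ → α) (c d : α) : Prop :=
  ((∀ m, 0 < m → g m = c) ∧ ∀ m, m < 0 → g m = d) ∨
  ((∀ m, 2 ≤ m → g m = c) ∧ ∀ m, m ≤ 1 → g m = d) ∨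
  ((∀ m, m ≤ -2 → g m = c) ∧ ∀ m, -1 ≤ m → g m = d)

theorem eq_of_ne_of_ne_of_two_valued {α : Type*} {g : ℤ → α} {c d : α}
    (hv : ∀ m, m ≠ 0 → g m = c ∨ g m = d) {x y z : ℤ}
    (hx : x ≠ 0) (hy : y ≠ 0) (hz : z ≠ 0) (hxy : g x ≠ g y) (hzy : g z ≠ g y) : g x = g z := by
  rcases hv x hx with h | h <;> rcases hv y hy with h' | h' <;> rcases hv z hz with h'' | h'' <;>
    simp_all

theorem isStepShape_or_swap_of_two_valued {α : Type*} {g : ℤ → α} {c d : α}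
    (hv : ∀ m, m ≠ 0 → g m = c ∨ g m = d) {x y : ℤ}
    (hx : x ≠ 0) (hy : y ≠ 0) (hxy : g x ≠ g y) (h : IsStepShape g (g x) (g y)) :
    IsStepShape g c d ∨ IsStepShape g d c := by
  rcases hv x hx with hgx | hgx <;> rcases hv y hy with hgy | hgy <;> rw [hgx, hgy] at h <;>
    simp_all

namespace LevelSetsSumClosed

variable {α : Type*} {g : ℤ → α} {c d : α}

theorem comp_neg (hs : LevelSetsSumClosed g) : LevelSetsSumClosed (fun m => g (-m)) :=
  fun m n hmn he => by simpa only [neg_add] using hs (-m) (-n) (by omega) he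

theorem of_cover {A B : Set ℤ} (hA : ∀ m ∈ A, ∀ n ∈ A, m ≠ n → m + n ∈ A)
    (hB : ∀ m ∈ B, ∀ n ∈ B, m ≠ n → m + n ∈ B) (hcover : ∀ m, m ≠ 0 → m ∈ A ∨ m ∈ B)
    (hgA : ∀ m ∈ A, g m = c) (hgB : ∀ m ∈ B, g m = d) (hcd : c ≠ d) :
    LevelSetsSumClosed g := by
  intro m n hmn he
  rcases eq_or_ne m 0 with rfl | hm
  · simpa using he.symm
  rcases eq_or_ne n 0 with rfl | hn
  · simp
  rcases hcover m hm with hmA | hmB <;> rcases hcover n hn with hnA | hnB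
  · rw [hgA _ (hA m hmA n hnA hmn), hgA m hmA]
  · exact absurd (by rw [← hgA m hmA, ← hgB n hnB, he]) hcd
  · exact absurd (by rw [← hgA n hnA, ← hgB m hmB, he]) hcd
  · rw [hgB _ (hB m hmB n hnB hmn), hgB m hmB]

theorem pos_const_or_jump (hs : LevelSetsSumClosed g) (hv : ∀ m, m ≠ 0 → g m = c ∨ g m = d) :
    (∀ m, 0 < m → g m = g 1) ∨ (g 1 ≠ g 2 ∧ ∀ m, 2 ≤ m → g m = g 2) := by
  by_cases h12 : g 1 = g 2
  · left
    intro m hm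
    induction m, hm using Int.leInduction with
    | base => rfl
    | succ n hn ih =>
      rcases eq_or_ne n 1 with rfl | hn1
      · exact h12.symm
      · rw [hs n 1 hn1 ih, ih]
  right
  have h3 : g 3 = g 2 := by
    -- otherwise `g (-1)` would be a third value, as `3 + (-1) = 2` and `2 + (-1) = 1`
    by_contra h3
    have h31 : g (-1) ≠ g 3 := fun h => h3 (by simpa using (hs 3 (-1) (by omega) h.symm).symm)
    have h21 : g (-1) ≠ g 2 := fun h => h12 (by simpa using hs 2 (-1) (by omega) h.symm)
    exact h31 (eq_of_ne_of_ne_of_two_valued hv (by omega) (by omega) (by omega) h21 h3)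
  have h4 : g 4 = g 2 := by
    by_contra h4
    have h41 : g 4 = g 1 := eq_of_ne_of_ne_of_two_valued hv (by omega) (by omega) (by omega) h4 h12
    have h5 : g 5 = g 1 := hs 1 4 (by omega) h41.symm
    have h5' : g 5 = g 2 := hs 2 3 (by omega) h3.symm
    exact h12 (h5.symm.trans h5')
  have key : ∀ n, 3 ≤ n → g n = g 2 ∧ g (n + 1) = g 2 := by
    intro n hn
    induction n, hn using Int.leInduction with
    | base => exact ⟨h3, h4⟩
    | succ k hk ih =>
      refine ⟨ih.2, ?_⟩
      rw [show k + 1 + 1 = k + 2 by ring, hs k 2 (by omega) ih.1, ih.1]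
  refine ⟨h12, fun m hm => ?_⟩
  rcases eq_or_lt_of_le hm with rfl | hm
  · rfl
  · exact (key m (by omega)).1

theorem neg_const_or_jump (hs : LevelSetsSumClosed g) (hv : ∀ m, m ≠ 0 → g m = c ∨ g m = d) :
    (∀ m, m < 0 → g m = g (-1)) ∨ (g (-1) ≠ g (-2) ∧ ∀ m, m ≤ -2 → g m = g (-2)) := by
  rcases hs.comp_neg.pos_const_or_jump (fun m hm => hv (-m) (neg_ne_zero.mpr hm)) with h | ⟨h12, h⟩
  · exact Or.inl fun m hm => by simpa using h (-m) (by omega)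
  · exact Or.inr ⟨h12, fun m hm => by simpa using h (-m) (by omega)⟩

theorem eq_of_pos_const_of_neg_jump (hs : LevelSetsSumClosed g)
    (hv : ∀ m, m ≠ 0 → g m = c ∨ g m = d) (hpos : ∀ m, 0 < m → g m = g 1)
    (hjump : g (-1) ≠ g (-2)) : ∀ m, -1 ≤ m → g m = g (-1) := by
  have h1 : g 1 = g (-1) := by
    by_contra h1
    have h12 : g 1 = g (-2) :=
      eq_of_ne_of_ne_of_two_valued hv (by omega) (by omega) (by omega) h1 hjump.symm
    exact h1 (by simpa using (hs 1 (-2) (by omega) h12).symm)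
  have h0 : g 0 = g (-1) := by simpa [h1] using hs 1 (-1) (by omega) h1
  intro m hm
  rcases lt_trichotomy m 0 with hm' | rfl | hm'
  · rw [show m = -1 by omega]
  · exact h0
  · rw [hpos m hm', h1]

theorem eq_of_neg_const_of_pos_jump (hs : LevelSetsSumClosed g)
    (hv : ∀ m, m ≠ 0 → g m = c ∨ g m = d) (hneg : ∀ m, m < 0 → g m = g (-1))
    (hjump : g 1 ≠ g 2) : ∀ m, m ≤ 1 → g m = g 1 := by
  have h := hs.comp_neg.eq_of_pos_const_of_neg_jump (fun m hm => hv (-m) (neg_ne_zero.mpr hm))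
    (fun m hm => hneg (-m) (by omega)) (by simpa using hjump)
  exact fun m hm => by simpa using h (-m) (by omega)

theorem not_pos_jump_and_neg_jump (hs : LevelSetsSumClosed g)
    (hv : ∀ m, m ≠ 0 → g m = c ∨ g m = d) (hjump : g 1 ≠ g 2)
    (hjump' : g (-1) ≠ g (-2)) (hneg : ∀ m, m ≤ -2 → g m = g (-2)) : False := by
  have h2 : g (-2) ≠ g 2 := by
    intro h
    have := hs 2 (-3) (by omega) (by rw [hneg (-3) (by omega), h])
    exact hjump' (by simpa [h] using this)
  have h1 : g 1 = g (-2) :=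
    eq_of_ne_of_ne_of_two_valued hv (by omega) (by omega) (by omega) hjump h2
  exact hjump' (by simpa [h1] using hs 1 (-2) (by omega) h1)

theorem classify (hs : LevelSetsSumClosed g) (hv : ∀ m, m ≠ 0 → g m = c ∨ g m = d) :
    (∀ m, g m = c) ∨ (∀ m, g m = d) ∨ IsStepShape g c d ∨ IsStepShape g d c := by
  rcases hs.pos_const_or_jump hv with hpos | ⟨hjump, hpos⟩ <;>
    rcases hs.neg_const_or_jump hv with hneg | ⟨hjump', hneg⟩
  · by_cases h : g 1 = g (-1)
    · have hconst : ∀ m, g m = g 1 := by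
        intro m
        rcases lt_trichotomy m 0 with hm | rfl | hm
        · rw [hneg m hm, h]
        · simpa using hs 1 (-1) (by omega) h
        · exact hpos m hm
      rcases hv 1 one_ne_zero with h1 | h1 <;> rw [h1] at hconst
      exacts [Or.inl hconst, Or.inr (Or.inl hconst)]
    · exact Or.inr <| Or.inr <|
        isStepShape_or_swap_of_two_valued hv one_ne_zero (by omega) h (Or.inl ⟨hpos, hneg⟩)
  · exact Or.inr <| Or.inr <| isStepShape_or_swap_of_two_valued hv (by omega) (by omega) hjump'.symm
      (Or.inr <| Or.inr ⟨hneg, hs.eq_of_pos_const_of_neg_jump hv hpos hjump'⟩)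
  · exact Or.inr <| Or.inr <| isStepShape_or_swap_of_two_valued hv (by omega) one_ne_zero hjump.symm
      (Or.inr <| Or.inl ⟨hpos, hs.eq_of_neg_const_of_pos_jump hv hneg hjump⟩)
  · exact (hs.not_pos_jump_and_neg_jump hv hjump hjump' hneg).elim

end LevelSetsSumClosed

namespace IsStepShape

variable {α : Type*} {g : ℤ → α} {c d : α}

theorem eq_or_eq (h : IsStepShape g c d) : ∀ m, m ≠ 0 → g m = c ∨ g m = d := by
  intro m hm
  rcases h with ⟨hc, hd⟩ | ⟨hc, hd⟩ | ⟨hc, hd⟩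
  · rcases hm.lt_or_gt with hm | hm
    exacts [Or.inr (hd m hm), Or.inl (hc m hm)]
  · rcases le_or_gt 2 m with hm | hm
    exacts [Or.inl (hc m hm), Or.inr (hd m (by omega))]
  · rcases le_or_gt m (-2) with hm | hm
    exacts [Or.inl (hc m hm), Or.inr (hd m (by omega))]

theorem levelSetsSumClosed (h : IsStepShape g c d) (hcd : c ≠ d) : LevelSetsSumClosed g := by
  rcases h with ⟨hc, hd⟩ | ⟨hc, hd⟩ | ⟨hc, hd⟩
  · exact .of_cover (A := Set.Ioi 0) (B := Set.Iio 0)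
      (fun m (hm : 0 < m) n (hn : 0 < n) _ => show 0 < m + n from add_pos hm hn)
      (fun m (hm : m < 0) n (hn : n < 0) _ => show m + n < 0 from add_neg hm hn)
      (fun m hm => hm.lt_or_gt.symm) hc hd hcd
  · exact .of_cover (A := Set.Ici 2) (B := Set.Iic 1)
      (fun m (hm : 2 ≤ m) n (hn : 2 ≤ n) _ => show 2 ≤ m + n by omega)
      (fun m (hm : m ≤ 1) n (hn : n ≤ 1) hmn => show m + n ≤ 1 by omega)
      (fun m _ => le_or_gt 2 m |>.imp id fun h => show m ≤ 1 by omega) hc hd hcd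
  · exact .of_cover (A := Set.Iic (-2)) (B := Set.Ici (-1))
      (fun m (hm : m ≤ -2) n (hn : n ≤ -2) _ => show m + n ≤ -2 by omega)
      (fun m (hm : -1 ≤ m) n (hn : -1 ≤ n) hmn => show -1 ≤ m + n by omega)
      (fun m _ => le_or_gt m (-2) |>.imp id fun h => show -1 ≤ m by omega) hc hd hcd

end IsStepShape

theorem forall_ne_zero_and_levelSetsSumClosed_iff {α : Type*} {g : ℤ → α} {c d : α}
    (hcd : c ≠ d) :
    ((∀ m, m ≠ 0 → g m = c ∨ g m = d) ∧ LevelSetsSumClosed g) ↔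
      (∀ m, g m = c) ∨ (∀ m, g m = d) ∨ IsStepShape g c d ∨ IsStepShape g d c := by
  refine ⟨fun ⟨hv, hs⟩ => hs.classify hv, ?_⟩
  rintro (h | h | h | h)
  · exact ⟨fun m _ => Or.inl (h m), fun m n _ _ => by rw [h, h]⟩
  · exact ⟨fun m _ => Or.inr (h m), fun m n _ _ => by rw [h, h]⟩
  · exact ⟨h.eq_or_eq, h.levelSetsSumClosed hcd⟩
  · exact ⟨fun m hm => (h.eq_or_eq m hm).symm, h.levelSetsSumClosed hcd.symm⟩

theorem eqE_iff {f : ℤ → ℂ} :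
    EqE f ↔ (∀ m, m ≠ 0 → f m = 0 ∨ f m = -1) ∧ LevelSetsSumClosed f := by
  constructor
  · intro h
    have hv : ∀ m, m ≠ 0 → f m = 0 ∨ f m = -1 := by
      intro m hm
      have key : (m : ℂ) * (f m * (f m + 1)) = 0 := by
        have h0 := h m 0
        rw [add_zero, Int.cast_zero, sub_zero] at h0
        linear_combination h0
      simpa [hm, add_eq_zero_iff_eq_neg] using key
    refine ⟨hv, fun m n hmn he => ?_⟩
    rcases eq_or_ne m 0 with rfl | hm
    · simpa using he.symm
    have hmn' : (m - n : ℂ) ≠ 0 := sub_ne_zero.mpr (Int.cast_injective.ne hmn)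
    have key := (mul_eq_zero.mp (h m n)).resolve_left hmn'
    rw [← he] at key
    rcases hv m hm with hc | hc <;> rw [hc] at key ⊢
    · linear_combination key
    · linear_combination -key
  · rintro ⟨hv, hs⟩ m n
    rcases eq_or_ne m n with rfl | hmn
    · simp
    refine mul_eq_zero_of_right _ ?_
    rcases eq_or_ne m 0 with rfl | hm
    · rw [zero_add]
      rcases hv n (Ne.symm hmn) with h | h <;> rw [h] <;> ring
    rcases eq_or_ne n 0 with rfl | hn
    · rw [add_zero]
      rcases hv m hm with h | h <;> rw [h] <;> ring
    rcases hv m hm with h1 | h1 <;> rcases hv n hn with h2 | h2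
    · rw [hs m n hmn (h1.trans h2.symm), h1, h2]; ring
    · rw [h1, h2]; ring
    · rw [h1, h2]; ring
    · rw [hs m n hmn (h1.trans h2.symm), h1, h2]; ring

theorem isGradedType_iff {f : ℤ → ℂ} :
    IsGradedType f ↔
      (∀ m, f m = 0) ∨ (∀ m, f m = -1) ∨ IsStepShape f 0 (-1) ∨ IsStepShape f (-1) 0 := by
  simp only [IsGradedType, IsStepShape, exists_and_left, exists_and_right, exists_eq', true_and]
  tauto

theorem isRotaBaxterWeightOne_iff_forall_L {br : W →ₗ[ℂ] W →ₗ[ℂ] W} {R : W →ₗ[ℂ] W} :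
    IsRotaBaxterWeightOne br R ↔ ∀ m n : ℤ, br (R (L m)) (R (L n)) =
      R (br (R (L m)) (L n) + br (L m) (R (L n))) + R (br (L m) (L n)) := by
  refine ⟨fun h m n => h _ _, fun h x y => ?_⟩
  have hext := LinearMap.ext_basis Finsupp.basisSingleOne Finsupp.basisSingleOne
    (B := br.compl₁₂ R R) (B' := (br ∘ₗ R + br.compl₂ R).compr₂ R + br.compr₂ R)
    (fun m n => by simpa [L] using h m n)
  simpa using LinearMap.congr_fun₂ hext x y

theorem rotaBaxter_L_iff {br : W →ₗ[ℂ] W →ₗ[ℂ] W}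
    (hbr : ∀ m n : ℤ, br (L m) (L n) = (m - n : ℂ) • L (m + n)) {f : ℤ → ℂ} {R : W →ₗ[ℂ] W}
    (hR : ∀ m : ℤ, R (L m) = f m • L m) (m n : ℤ) :
    br (R (L m)) (R (L n)) = R (br (R (L m)) (L n) + br (L m) (R (L n))) + R (br (L m) (L n)) ↔
      (m - n : ℂ) * (f (m + n) + f m * f (m + n) + f n * f (m + n) - f m * f n) = 0 := by
  have hL : L (m + n) ≠ 0 := Finsupp.single_ne_zero.mpr one_ne_zero
  simp only [hR, map_smul, LinearMap.smul_apply, hbr, smul_smul, ← add_smul]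
  rw [(smul_left_injective ℂ hL).eq_iff]
  constructor <;> intro h <;> linear_combination -h

theorem stmt17 (br : W →ₗ[ℂ] W →ₗ[ℂ] W)
    (hbr : ∀ m n : ℤ, br (L m) (L n) = (m - n : ℂ) • L (m + n))
    (f : ℤ → ℂ) (R : W →ₗ[ℂ] W)
    (hR : ∀ m : ℤ, R (L m) = f m • L m) :
    IsRotaBaxterWeightOne br R ↔ IsGradedType f := by
  rw [isRotaBaxterWeightOne_iff_forall_L, isGradedType_iff,
    ← forall_ne_zero_and_levelSetsSumClosed_iff (by norm_num), ← eqE_iff]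
  exact forall₂_congr fun m n => rotaBaxter_L_iff hbr hR m n
end
end

section
/- Let 𝔤 be the complex Lie algebra with ℂ-basis {L_m : m ∈ ℤ} and Lie bracket determined by {L_m, L_n} = (n − m)·L_{m+n} if m ≥ 2 and n ≥ 2; {L_m, L_n} = (m − n)·L_{m+n} if m ≤ 1 and n ≤ 1; and {L_m, L_n} = 0 if exactly one of m, n is ≥ 2. Let V be the ℂ-vector space with basis {v_n : n ∈ ℤ}. Then the bilinear action determined by L_m · v_n = (n − m)·v_{m+n} for m ≥ 2 and L_m · v_n = 0 for m ≤ 1 makes V a module over 𝔤, i.e. {x, y} · v = x · (y · v) − y · (x · v) for all x, y ∈ 𝔤 and v ∈ V. -/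
noncomputable section

/-! The span of the `L m` with `m ≤ 1` is an ideal acting by zero, so the identity reduces to basis vectors `L m`, `L n` with `m, n ≥ 2`, where it is the Witt-algebra
computation `(p - n)(n + p - m) - (p - m)(m + p - n) = (m - n)(m + n - p)`. -/

theorem act_bracket_of_basis {R ι κ M N : Type*} [CommRing R] [AddCommGroup M] [Module R M]
    [AddCommGroup N] [Module R N] (e : Module.Basis ι R M) (f : Module.Basis κ R N)
    (b : M →ₗ[R] M →ₗ[R] M) (act : M →ₗ[R] N →ₗ[R] N)
    (h : ∀ i j k, act (b (e i) (e j)) (f k) =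
      act (e i) (act (e j) (f k)) - act (e j) (act (e i) (f k)))
    (x y : M) (v : N) : act (b x y) v = act x (act y v) - act y (act x v) := by
  let comp := (LinearMap.llcomp R N N N).compl₁₂ act act
  have hcomp : b.compr₂ act = comp - comp.flip :=
    LinearMap.ext_basis e e fun i j => f.ext fun k => by simpa [comp] using h i j k
  simpa [comp] using LinearMap.congr_fun (LinearMap.congr_fun (LinearMap.congr_fun hcomp x) y) v

lemma L_eq_basisSingleOne (m : ℤ) : L m = Finsupp.basisSingleOne m := rfl

section

variable {act : W →ₗ[ℂ] W →ₗ[ℂ] W}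

lemma act_L_eq_zero (hact₂ : ∀ m n : ℤ, m ≤ 1 → act (L m) (L n) = 0) {m : ℤ} (hm : m ≤ 1) :
    act (L m) = 0 :=
  Finsupp.basisSingleOne.ext fun n => hact₂ m n hm

lemma act_L_L_L_of_two_le (hact₁ : ∀ m n : ℤ, 2 ≤ m → act (L m) (L n) = (n - m : ℂ) • L (m + n))
    {m n : ℤ} (hm : 2 ≤ m) (hn : 2 ≤ n) (p : ℤ) :
    act (L m) (act (L n) (L p)) - act (L n) (act (L m) (L p)) =
      ((m - n) * (m + n - p) : ℂ) • L (m + n + p) := by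
  rw [hact₁ n p hn, hact₁ m p hm, map_smul, map_smul, hact₁ m _ hm, hact₁ n _ hn, smul_smul,
    smul_smul, show m + (n + p) = m + n + p by ring, show n + (m + p) = m + n + p by ring,
    ← sub_smul]
  congr 1
  push_cast
  ring

lemma act_bracket_L_eq_zero_of_le_one {b : W →ₗ[ℂ] W →ₗ[ℂ] W}
    (hb₂ : ∀ m n : ℤ, m ≤ 1 → n ≤ 1 → b (L m) (L n) = (m - n : ℂ) • L (m + n))
    (hb₄ : ∀ m n : ℤ, m ≤ 1 → 2 ≤ n → b (L m) (L n) = 0)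
    (hact₂ : ∀ m n : ℤ, m ≤ 1 → act (L m) (L n) = 0) {m : ℤ} (hm : m ≤ 1) (n : ℤ) :
    act (b (L m) (L n)) = 0 := by
  rcases le_or_gt n 1 with hn | hn
  · rcases le_or_gt (m + n) 1 with hmn | hmn
    · rw [hb₂ m n hm hn, map_smul, act_L_eq_zero hact₂ hmn, smul_zero]
    · obtain ⟨rfl, rfl⟩ : m = 1 ∧ n = 1 := by omega
      simp [hb₂ 1 1 le_rfl le_rfl]
  · rw [hb₄ m n hm (by omega), map_zero]

end

theorem stmt19 (b : W →ₗ[ℂ] W →ₗ[ℂ] W)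
    (hb₁ : ∀ m n : ℤ, 2 ≤ m → 2 ≤ n → b (L m) (L n) = (n - m : ℂ) • L (m + n))
    (hb₂ : ∀ m n : ℤ, m ≤ 1 → n ≤ 1 → b (L m) (L n) = (m - n : ℂ) • L (m + n))
    (hb₃ : ∀ m n : ℤ, 2 ≤ m → n ≤ 1 → b (L m) (L n) = 0)
    (hb₄ : ∀ m n : ℤ, m ≤ 1 → 2 ≤ n → b (L m) (L n) = 0)
    (act : W →ₗ[ℂ] W →ₗ[ℂ] W)
    (hact₁ : ∀ m n : ℤ, 2 ≤ m → act (L m) (L n) = (n - m : ℂ) • L (m + n))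
    (hact₂ : ∀ m n : ℤ, m ≤ 1 → act (L m) (L n) = 0) :
    ∀ (x y : W) (v : W), act (b x y) v = act x (act y v) - act y (act x v) := by
  refine act_bracket_of_basis Finsupp.basisSingleOne Finsupp.basisSingleOne b act fun m n p => ?_
  simp only [← L_eq_basisSingleOne]
  rcases le_or_gt m 1 with hm | hm
  · simp [act_bracket_L_eq_zero_of_le_one hb₂ hb₄ hact₂ hm, act_L_eq_zero hact₂ hm]
  rcases le_or_gt n 1 with hn | hn
  · simp [hb₃ m n (by omega) hn, act_L_eq_zero hact₂ hn]
  rw [act_L_L_L_of_two_le hact₁ (by omega) (by omega), hb₁ m n (by omega) (by omega), map_smul,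
    LinearMap.smul_apply, hact₁ _ _ (by omega), smul_smul]
  congr 1
  push_cast
  ring
end
end
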